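/- arXiv:math/0607485 — 13 statements merged into one kernel-verified Lean document; each statement's English description precedes it below -/
import Mathlib

section
/- If (x, z, θ) is a solution of the system (P) on ℝ with x(0) = 0, θ(0) = 0 and z(0) = z₀, then for every s ∈ ℝ one has the first integral z(s)² = z₀² + (2/κ)(1 − cos θ(s)). In particular the function z is bounded. -/
open Real

theorem hasDerivAt_first_integral {κ s : ℝ} {z θ : ℝ → ℝ}
    (hz : HasDerivAt z (sin (θ s)) s) (hθ : HasDerivAt θ (κ * z s) s) :
    HasDerivAt (fun t => κ * z t ^ 2 + 2 * cos (θ t)) 0 s := by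
  have h := ((hz.fun_pow 2).const_mul κ).fun_add ((hθ.cos).const_mul 2)
  refine h.congr_deriv ?_
  norm_num
  ring

theorem first_integral_eq {κ : ℝ} {z θ : ℝ → ℝ}
    (hz : ∀ s, HasDerivAt z (sin (θ s)) s) (hθ : ∀ s, HasDerivAt θ (κ * z s) s) (s : ℝ) :
    κ * z s ^ 2 + 2 * cos (θ s) = κ * z 0 ^ 2 + 2 * cos (θ 0) := by
  have hF := fun t => hasDerivAt_first_integral (hz t) (hθ t)
  exact is_const_of_deriv_eq_zero (fun t => (hF t).differentiableAt) (fun t => (hF t).deriv) s 0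

theorem mul_one_sub_cos_le (c t : ℝ) : c * (1 - cos t) ≤ 2 * |c| := by
  have h : |1 - cos t| ≤ 2 := abs_le.mpr ⟨by linarith [cos_le_one t], by linarith [neg_one_le_cos t]⟩
  calc c * (1 - cos t) ≤ |c| * |1 - cos t| := (le_abs_self _).trans (abs_mul _ _).le
    _ ≤ |c| * 2 := mul_le_mul_of_nonneg_left h (abs_nonneg c)
    _ = 2 * |c| := mul_comm _ _

theorem stmt_1_general (κ : ℝ) (hκ : κ ≠ 0) (z₀ : ℝ) (x z θ : ℝ → ℝ)
    (hz : Differentiable ℝ z) (hθ : Differentiable ℝ θ)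
    (hode : ∀ s : ℝ, deriv x s = Real.cos (θ s) ∧ deriv z s = Real.sin (θ s) ∧
      deriv θ s = κ * z s)
    (hθ0 : θ 0 = 0) (hz0 : z 0 = z₀) :
    (∀ s : ℝ, (z s) ^ 2 = z₀ ^ 2 + (2 / κ) * (1 - Real.cos (θ s))) ∧
    (∃ M : ℝ, ∀ s : ℝ, |z s| ≤ M) := by
  have hz' : ∀ s, HasDerivAt z (sin (θ s)) s := fun s => (hode s).2.1 ▸ (hz s).hasDerivAt
  have hθ' : ∀ s, HasDerivAt θ (κ * z s) s := fun s => (hode s).2.2 ▸ (hθ s).hasDerivAt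
  have hfirst : ∀ s, z s ^ 2 = z₀ ^ 2 + (2 / κ) * (1 - cos (θ s)) := by
    intro s
    have h := first_integral_eq hz' hθ' s
    rw [hθ0, hz0, cos_zero] at h
    field_simp
    linarith
  refine ⟨hfirst, √(z₀ ^ 2 + 2 * |2 / κ|), fun s => abs_le_sqrt ?_⟩
  rw [hfirst s]
  linarith [mul_one_sub_cos_le (2 / κ) (θ s)]

/-- First integral of the system (P):
z(s)² = z₀² + (2/κ)(1 − cos θ(s)) for all s; in particular z is bounded. -/
theorem stmt_1 (κ : ℝ) (hκ : κ ≠ 0) (z₀ : ℝ) (x z θ : ℝ → ℝ)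
    (hx : Differentiable ℝ x) (hz : Differentiable ℝ z) (hθ : Differentiable ℝ θ)
    (hode : ∀ s : ℝ, deriv x s = Real.cos (θ s) ∧ deriv z s = Real.sin (θ s) ∧
      deriv θ s = κ * z s)
    (hx0 : x 0 = 0) (hθ0 : θ 0 = 0) (hz0 : z 0 = z₀) :
    (∀ s : ℝ, (z s) ^ 2 = z₀ ^ 2 + (2 / κ) * (1 - Real.cos (θ s))) ∧
    (∃ M : ℝ, ∀ s : ℝ, |z s| ≤ M) :=
  stmt_1_general κ hκ z₀ x z θ hz hθ hode hθ0 hz0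
end

section
/- (Symmetry I) Let (x, z, θ) be a solution of the system (P) on ℝ and suppose θ(s₀) = m·π for some s₀ ∈ ℝ and some integer m (i.e. s₀ is an extremum of the height z). Then for every s ∈ ℝ: x(s₀ + s) = 2 x(s₀) − x(s₀ − s), z(s₀ + s) = z(s₀ − s), and θ(s₀ + s) = 2mπ − θ(s₀ − s). In other words, the directrix curve α = (x, z) is symmetric with respect to the vertical line x = x(s₀). -/
/-!
The pair `(z, θ)` solves the autonomous system `z' = sin θ`, `θ' = κ z`, whose right-hand side
is Lipschitz. The map `(z, θ) ↦ (z, 2mπ - θ)` reverses this vector field, so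
`s ↦ (z (2s₀ - s), 2mπ - θ (2s₀ - s))` is again a solution; when `θ s₀ = mπ` it agrees with
`(z, θ)` at `s₀`, hence everywhere by uniqueness. Then `x' = cos θ` is even about `s₀`, so `x` is
odd about `s₀`.
-/

open Real NNReal

theorem ODE_solution_apply_add_eq_of_time_reversal {E : Type*} [NormedAddCommGroup E]
    [NormedSpace ℝ E] {F : E → E} {K : ℝ≥0} (hF : LipschitzWith K F) {σ : E → E} {L : E →L[ℝ] E}
    (hσ : ∀ p, HasFDerivAt σ L p) (hσF : ∀ p, F (σ p) = -L (F p))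
    {u : ℝ → E} (hu : ∀ t, HasDerivAt u (F (u t)) t) {s₀ : ℝ} (hs₀ : σ (u s₀) = u s₀)
    (s : ℝ) : u (s₀ + s) = σ (u (s₀ - s)) := by
  have hreflected : ∀ t, HasDerivAt (fun t ↦ σ (u (2 * s₀ - t))) (F (σ (u (2 * s₀ - t)))) t := by
    intro t
    have hu' := (hu (2 * s₀ - t)).scomp t ((hasDerivAt_id' t).const_sub (2 * s₀))
    simpa [hσF, Function.comp_def] using (hσ _).comp_hasDerivAt t hu'
  have hsol := ODE_solution_unique_univ (v := fun _ ↦ F) (s := fun _ ↦ Set.univ) (t₀ := s₀)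
    (fun _ ↦ hF.lipschitzOnWith) (fun t ↦ ⟨hu t, trivial⟩) (fun t ↦ ⟨hreflected t, trivial⟩)
    (by simpa [two_mul] using hs₀.symm)
  simpa [two_mul, add_sub_add_left_eq_sub] using congrFun hsol (s₀ + s)

theorem eq_two_mul_sub_of_hasDerivAt_of_even {f f' : ℝ → ℝ} (hf : ∀ t, HasDerivAt f (f' t) t)
    {s₀ : ℝ} (hf' : ∀ s, f' (s₀ + s) = f' (s₀ - s)) (s : ℝ) :
    f (s₀ + s) = 2 * f s₀ - f (s₀ - s) := by
  have hsum : ∀ t, HasDerivAt (fun t ↦ f (s₀ + t) + f (s₀ - t)) 0 t := by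
    intro t
    have h : HasDerivAt (fun t ↦ f (s₀ + t) + f (s₀ - t))
        (f' (s₀ + t) * 1 + f' (s₀ - t) * -1) t :=
      ((hf _).comp t ((hasDerivAt_id' t).const_add s₀)).add
        ((hf _).comp t ((hasDerivAt_id' t).const_sub s₀))
    simpa [hf' t] using h
  have hconst := is_const_of_deriv_eq_zero (fun t ↦ (hsum t).differentiableAt)
    (fun t ↦ (hsum t).deriv) s 0
  simp only [add_zero, sub_zero] at hconst
  linarith

/-- The `(z, θ)` part of the system (P). -/
noncomputable def heightAngleField (κ : ℝ) (p : ℝ × ℝ) : ℝ × ℝ := (sin p.2, κ * p.1)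

theorem lipschitzWith_heightAngleField (κ : ℝ) :
    LipschitzWith (max 1 ‖κ‖₊) (heightAngleField κ) := by
  have hsin : LipschitzWith 1 fun p : ℝ × ℝ ↦ sin p.2 := by
    simpa [Function.comp_def] using lipschitzWith_sin.comp (LipschitzWith.prod_snd (α := ℝ))
  have hmul : LipschitzWith ‖κ‖₊ fun p : ℝ × ℝ ↦ κ * p.1 := by
    simpa [Function.comp_def, smul_eq_mul] using
      (lipschitzWith_smul (β := ℝ) κ).comp (LipschitzWith.prod_fst (α := ℝ) (β := ℝ))
  exact hsin.prodMk hmul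

theorem heightAngleField_reflect (κ : ℝ) (m : ℤ) (p : ℝ × ℝ) :
    heightAngleField κ (p.1, 2 * m * π - p.2) =
      -((ContinuousLinearMap.fst ℝ ℝ ℝ).prod (-ContinuousLinearMap.snd ℝ ℝ ℝ))
        (heightAngleField κ p) := by
  have hsin : sin (2 * m * π - p.2) = -sin p.2 := by
    rw [show 2 * (m : ℝ) * π = m * (2 * π) by ring, sin_int_mul_two_pi_sub]
  simp [heightAngleField, hsin]

theorem stmt_2_general (κ : ℝ) (x z θ : ℝ → ℝ)
    (hx : Differentiable ℝ x) (hz : Differentiable ℝ z) (hθ : Differentiable ℝ θ)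
    (hode : ∀ s : ℝ, deriv x s = Real.cos (θ s) ∧ deriv z s = Real.sin (θ s) ∧
      deriv θ s = κ * z s)
    (s₀ : ℝ) (m : ℤ) (hs₀ : θ s₀ = (m : ℝ) * Real.pi) :
    ∀ s : ℝ,
      x (s₀ + s) = 2 * x s₀ - x (s₀ - s) ∧
      z (s₀ + s) = z (s₀ - s) ∧
      θ (s₀ + s) = 2 * (m : ℝ) * Real.pi - θ (s₀ - s) := by
  have hzθ : ∀ t, HasDerivAt (fun t ↦ (z t, θ t)) (heightAngleField κ (z t, θ t)) t := by
    intro t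
    simpa [heightAngleField, (hode t).2.1, (hode t).2.2] using
      (hz t).hasDerivAt.prodMk (hθ t).hasDerivAt
  have hsym (s : ℝ) : (z (s₀ + s), θ (s₀ + s)) = (z (s₀ - s), 2 * m * π - θ (s₀ - s)) :=
    ODE_solution_apply_add_eq_of_time_reversal (lipschitzWith_heightAngleField κ)
      (fun _ ↦ hasFDerivAt_fst.prodMk (hasFDerivAt_snd.const_sub _))
      (heightAngleField_reflect κ m) hzθ (by rw [hs₀]; ring_nf) s
  have hx' : ∀ t, HasDerivAt x (cos (θ t)) t := fun t ↦ (hode t).1 ▸ (hx t).hasDerivAt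
  have hcos_even (s : ℝ) : cos (θ (s₀ + s)) = cos (θ (s₀ - s)) := by
    rw [(Prod.mk.inj (hsym s)).2, show 2 * (m : ℝ) * π = m * (2 * π) by ring,
      cos_int_mul_two_pi_sub]
  exact fun s ↦ ⟨eq_two_mul_sub_of_hasDerivAt_of_even hx' hcos_even s,
    (Prod.mk.inj (hsym s)).1, (Prod.mk.inj (hsym s)).2⟩

/-- Symmetry I: if θ(s₀) = mπ for some integer m, then the directrix
α = (x, z) is symmetric with respect to the vertical line x = x(s₀). -/
theorem stmt_2 (κ : ℝ) (hκ : κ ≠ 0) (z₀ : ℝ) (x z θ : ℝ → ℝ)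
    (hx : Differentiable ℝ x) (hz : Differentiable ℝ z) (hθ : Differentiable ℝ θ)
    (hode : ∀ s : ℝ, deriv x s = Real.cos (θ s) ∧ deriv z s = Real.sin (θ s) ∧
      deriv θ s = κ * z s)
    (hx0 : x 0 = 0) (hθ0 : θ 0 = 0) (hz0 : z 0 = z₀)
    (s₀ : ℝ) (m : ℤ) (hs₀ : θ s₀ = (m : ℝ) * Real.pi) :
    ∀ s : ℝ,
      x (s₀ + s) = 2 * x s₀ - x (s₀ - s) ∧
      z (s₀ + s) = z (s₀ - s) ∧
      θ (s₀ + s) = 2 * (m : ℝ) * Real.pi - θ (s₀ - s) :=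
  stmt_2_general κ x z θ hx hz hθ hode s₀ m hs₀
end

section
/- (Symmetry II) Let (x, z, θ) be a solution of the system (P) on ℝ and suppose z(s₀) = 0 for some s₀ ∈ ℝ. Then for every s ∈ ℝ: x(s₀ + s) = 2 x(s₀) − x(s₀ − s), z(s₀ + s) = − z(s₀ − s), and θ(s₀ + s) = θ(s₀ − s). In other words, the directrix curve α = (x, z) is symmetric with respect to the point α(s₀) on the x-axis. -/
/-!
Write `F = (z, θ)`; it solves the autonomous system `F' = v F` with `v (z, θ) = (sin θ, κ z)`.
The reflection `R (z, θ) = (-z, θ)` reverses this field, `v ∘ R = -(R ∘ v)`, so `s ↦ R (F (s₀ - s))`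
solves the same system; when `z s₀ = 0` it starts at `F s₀`, and uniqueness for the Lipschitz
field `v` makes it equal to `s ↦ F (s₀ + s)`. The symmetry of `x` then follows because `θ` is even
about `s₀`, so `s ↦ x (s₀ + s) + x (s₀ - s)` has zero derivative.
-/

section Reversible

variable {E : Type*} [NormedAddCommGroup E] [NormedSpace ℝ E]

theorem eq_apply_comp_sub_of_reversible {K : NNReal} {v : E → E} (hv : LipschitzWith K v)
    (R : E →L[ℝ] E) (hR : ∀ p, v (R p) = -R (v p)) {f : ℝ → E}
    (hf : ∀ t, HasDerivAt f (v (f t)) t) {s₀ : ℝ} (hs₀ : R (f s₀) = f s₀) (s : ℝ) :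
    f (s₀ + s) = R (f (s₀ - s)) := by
  have hforward : ∀ t, HasDerivAt (fun t ↦ f (s₀ + t)) (v (f (s₀ + t))) t :=
    fun t ↦ (hf (s₀ + t)).comp_const_add s₀ t
  have hbackward : ∀ t, HasDerivAt (fun t ↦ R (f (s₀ - t))) (v (R (f (s₀ - t)))) t := by
    intro t
    rw [hR, ← map_neg]
    exact R.hasFDerivAt.comp_hasDerivAt t ((hf (s₀ - t)).comp_const_sub s₀ t)
  have := ODE_solution_unique_univ (v := fun _ ↦ v) (s := fun _ ↦ Set.univ) (t₀ := 0)
    (fun _ ↦ hv.lipschitzOnWith) (fun t ↦ ⟨hforward t, trivial⟩)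
    (fun t ↦ ⟨hbackward t, trivial⟩) (by simp [hs₀])
  exact congrFun this s

theorem add_comp_sub_eq_two_smul_of_hasDerivAt {g g' : ℝ → E} (hg : ∀ t, HasDerivAt g (g' t) t)
    {s₀ : ℝ} (hg' : ∀ s, g' (s₀ + s) = g' (s₀ - s)) (s : ℝ) :
    g (s₀ + s) + g (s₀ - s) = (2 : ℝ) • g s₀ := by
  have hderiv : ∀ t, HasDerivAt (fun t ↦ g (s₀ + t) + g (s₀ - t)) 0 t := by
    intro t
    have := ((hg (s₀ + t)).comp_const_add s₀ t).add ((hg (s₀ - t)).comp_const_sub s₀ t)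
    rwa [hg', add_neg_cancel] at this
  have := is_const_of_deriv_eq_zero (fun t ↦ (hderiv t).differentiableAt)
    (fun t ↦ (hderiv t).deriv) s 0
  simpa [two_smul] using this

end Reversible

theorem lipschitzWith_sin_snd_prod_mul_fst (κ : ℝ) :
    LipschitzWith (max 1 ‖κ‖₊) fun p : ℝ × ℝ ↦ (Real.sin p.2, κ * p.1) := by
  have h : LipschitzWith (max (1 * 1) (‖κ‖₊ * 1)) fun p : ℝ × ℝ ↦ (Real.sin p.2, κ * p.1) :=
    (Real.lipschitzWith_sin.comp LipschitzWith.prod_snd).prodMk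
    ((lipschitzWith_smul (α := ℝ) κ).comp LipschitzWith.prod_fst)
  rwa [mul_one, mul_one] at h

theorem stmt_3_general (κ : ℝ) (x z θ : ℝ → ℝ)
    (hx : Differentiable ℝ x) (hz : Differentiable ℝ z) (hθ : Differentiable ℝ θ)
    (hode : ∀ s : ℝ, deriv x s = Real.cos (θ s) ∧ deriv z s = Real.sin (θ s) ∧
      deriv θ s = κ * z s)
    (s₀ : ℝ) (hs₀ : z s₀ = 0) :
    ∀ s : ℝ,
      x (s₀ + s) = 2 * x s₀ - x (s₀ - s) ∧
      z (s₀ + s) = - z (s₀ - s) ∧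
      θ (s₀ + s) = θ (s₀ - s) := by
  have hzθ : ∀ t, HasDerivAt (fun s ↦ (z s, θ s)) (Real.sin (θ t), κ * z t) t := fun t ↦ by
    simpa only [(hode t).2.1, (hode t).2.2] using (hz t).hasDerivAt.prodMk (hθ t).hasDerivAt
  have hx' : ∀ t, HasDerivAt x (Real.cos (θ t)) t := fun t ↦ (hode t).1 ▸ (hx t).hasDerivAt
  have hsym (s : ℝ) : (z (s₀ + s), θ (s₀ + s)) = (-z (s₀ - s), θ (s₀ - s)) :=
    eq_apply_comp_sub_of_reversible (lipschitzWith_sin_snd_prod_mul_fst κ)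
      ((-ContinuousLinearMap.id ℝ ℝ).prodMap (ContinuousLinearMap.id ℝ ℝ))
      (fun p ↦ by simp) hzθ (by simp [hs₀]) s
  have hθsym (s : ℝ) : θ (s₀ + s) = θ (s₀ - s) := (Prod.ext_iff.1 (hsym s)).2
  intro s
  have hxsym := add_comp_sub_eq_two_smul_of_hasDerivAt hx' (s₀ := s₀)
    (fun s ↦ congrArg Real.cos (hθsym s)) s
  rw [smul_eq_mul] at hxsym
  exact ⟨by linarith, (Prod.ext_iff.1 (hsym s)).1, hθsym s⟩

/-- Symmetry II: if z(s₀) = 0, then the directrix α = (x, z)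
is symmetric with respect to the point α(s₀) on the x-axis. -/
theorem stmt_3 (κ : ℝ) (hκ : κ ≠ 0) (z₀ : ℝ) (x z θ : ℝ → ℝ)
    (hx : Differentiable ℝ x) (hz : Differentiable ℝ z) (hθ : Differentiable ℝ θ)
    (hode : ∀ s : ℝ, deriv x s = Real.cos (θ s) ∧ deriv z s = Real.sin (θ s) ∧
      deriv θ s = κ * z s)
    (hx0 : x 0 = 0) (hθ0 : θ 0 = 0) (hz0 : z 0 = z₀)
    (s₀ : ℝ) (hs₀ : z s₀ = 0) :
    ∀ s : ℝ,
      x (s₀ + s) = 2 * x s₀ - x (s₀ - s) ∧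
      z (s₀ + s) = - z (s₀ - s) ∧
      θ (s₀ + s) = θ (s₀ - s) :=
  stmt_3_general κ x z θ hx hz hθ hode s₀ hs₀
end

section
/- (Sessile case) Let κ > 0 and let (x, z, θ) be the solution of the system (P) on ℝ with x(0) = 0, θ(0) = 0 and z(0) = z₀ > 0. Then there exists T > 0 with θ(T) = 2π such that for every s ∈ ℝ: x(s + T) = x(s) + x(T), z(s + T) = z(s), and θ(s + T) = θ(s) + 2π. In particular z is a periodic function and the surface is invariant under the group of translations by integer multiples of the horizontal vector (x(T), 0, 0). -/
/-!
Along a solution the energy `κ z² + 2 cos θ` is conserved. For `κ > 0` this forces `z² ≥ z(0)²`,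
so `z` never vanishes and stays above `z(0) > 0`; hence `θ' = κ z ≥ κ z(0)` and `θ` reaches `2π` at
some `T > 0`, where conservation of energy gives back `z(T) = z(0)`. The plane system for `(z, θ)`
is autonomous, Lipschitz and invariant under `θ ↦ θ - 2π`, so by uniqueness of solutions
`(z(s + T), θ(s + T) - 2π) = (z(s), θ(s))`. Finally `x' = cos θ` is then `T`-periodic, which makes
`x(s + T) - x(s)` constant.
-/

open Real Set

theorem Continuous.pos_of_forall_ne_zero {X : Type*} [TopologicalSpace X] [PreconnectedSpace X]
    {f : X → ℝ} (hf : Continuous f) (hne : ∀ x, f x ≠ 0) {a : X} (ha : 0 < f a) (b : X) :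
    0 < f b := by
  by_contra! hb
  obtain ⟨c, -, hc⟩ := isPreconnected_univ.intermediate_value (mem_univ b) (mem_univ a)
    hf.continuousOn ⟨hb, ha.le⟩
  exact hne c hc

theorem add_sub_eq_of_hasDerivAt_of_periodic {E : Type*} [NormedAddCommGroup E]
    [NormedSpace ℝ E] {f f' : ℝ → E} {T : ℝ} (hf : ∀ s, HasDerivAt f (f' s) s)
    (hper : Function.Periodic f' T) (s : ℝ) : f (s + T) - f s = f T - f 0 := by
  have hdiff : ∀ t, HasDerivAt (fun t => f (t + T) - f t) 0 t := fun t => by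
    simpa [hper t] using ((hf (t + T)).comp_add_const t T).fun_sub (hf t)
  simpa using is_const_of_deriv_eq_zero (fun t => (hdiff t).differentiableAt)
    (fun t => (hdiff t).deriv) s 0

namespace KappaCurve

def IsSolution (κ : ℝ) (z θ : ℝ → ℝ) : Prop :=
  ∀ s, HasDerivAt z (sin (θ s)) s ∧ HasDerivAt θ (κ * z s) s

theorem lipschitzWith_field (κ : ℝ) :
    LipschitzWith (max 1 ‖κ‖₊) (fun p : ℝ × ℝ => (sin p.2, κ * p.1)) := by
  have hsin := lipschitzWith_sin.comp (LipschitzWith.prod_snd (α := ℝ) (β := ℝ))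
  have hmul := (lipschitzWith_smul κ).comp (LipschitzWith.prod_fst (α := ℝ) (β := ℝ))
  rw [mul_one] at hsin hmul
  exact hsin.prodMk hmul

variable {κ : ℝ} {z θ : ℝ → ℝ}

theorem energy_eq (h : IsSolution κ z θ) (s t : ℝ) :
    κ * z s ^ 2 + 2 * cos (θ s) = κ * z t ^ 2 + 2 * cos (θ t) := by
  have hE : ∀ s, HasDerivAt (fun s => κ * z s ^ 2 + 2 * cos (θ s)) 0 s := fun s =>
    ((((h s).1.fun_pow 2).const_mul κ).fun_add ((h s).2.cos.const_mul 2)).congr_deriv (by ring)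
  exact is_const_of_deriv_eq_zero (fun s => (hE s).differentiableAt) (fun s => (hE s).deriv) s t

theorem shift_eq_of_return (h : IsSolution κ z θ) {T : ℝ} (hzT : z T = z 0)
    (hθT : θ T = θ 0 + 2 * π) (s : ℝ) : z (s + T) = z s ∧ θ (s + T) = θ s + 2 * π := by
  have hshift : ∀ t, HasDerivAt (fun t => (z (t + T), θ (t + T) - 2 * π))
      (sin (θ (t + T) - 2 * π), κ * z (t + T)) t := fun t => by
    rw [sin_sub_two_pi]
    exact ((h (t + T)).1.comp_add_const t T).prodMk
      (((h (t + T)).2.comp_add_const t T).sub_const _)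
  have heq := ODE_solution_unique_univ (t₀ := 0) (s := fun _ => univ)
    (fun _ => (lipschitzWith_field κ).lipschitzOnWith) (fun t => ⟨hshift t, trivial⟩)
    (fun t => ⟨(h t).1.prodMk (h t).2, trivial⟩) (by simp [hzT, hθT])
  have hs := congrFun heq s
  simp only [Prod.mk.injEq] at hs
  exact ⟨hs.1, by linarith [hs.2]⟩

theorem sq_height_zero_le (h : IsSolution κ z θ) (hκ : 0 < κ) (hθ0 : θ 0 = 0) (s : ℝ) :
    z 0 ^ 2 ≤ z s ^ 2 := by
  have hE := energy_eq h s 0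
  rw [hθ0, cos_zero] at hE
  nlinarith [cos_le_one (θ s)]

theorem height_zero_le (h : IsSolution κ z θ) (hκ : 0 < κ) (hθ0 : θ 0 = 0) (hz0 : 0 < z 0) (s : ℝ) :
    z 0 ≤ z s := by
  have hzc : Continuous z := continuous_iff_continuousAt.2 fun t => (h t).1.continuousAt
  have hpos : 0 < z s := hzc.pos_of_forall_ne_zero (fun t ht => by
    nlinarith [sq_height_zero_le h hκ hθ0 t, ht]) hz0 s
  exact (sq_le_sq₀ hz0.le hpos.le).1 (sq_height_zero_le h hκ hθ0 s)

theorem exists_angle_eq_two_pi (h : IsSolution κ z θ) (hκ : 0 < κ) (hθ0 : θ 0 = 0)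
    (hz0 : 0 < z 0) :
    ∃ T, 0 < T ∧ θ T = 2 * π := by
  have hθd : Differentiable ℝ θ := fun t => (h t).2.differentiableAt
  have hc : 0 < κ * z 0 := mul_pos hκ hz0
  set S := 2 * π / (κ * z 0)
  have hS : 0 ≤ S := by positivity
  have hθS : 2 * π ≤ θ S := by
    have := mul_sub_le_image_sub_of_le_deriv hθd (C := κ * z 0)
      (fun t => (h t).2.deriv ▸ mul_le_mul_of_nonneg_left (height_zero_le h hκ hθ0 hz0 t) hκ.le) hS
    rwa [sub_zero, hθ0, sub_zero, mul_div_cancel₀ _ hc.ne'] at this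
  obtain ⟨T, hTS, hθT⟩ := intermediate_value_Icc hS hθd.continuous.continuousOn
    ⟨hθ0.le.trans (by positivity), hθS⟩
  refine ⟨T, hTS.1.lt_of_ne ?_, hθT⟩
  rintro rfl
  linarith [pi_pos]

theorem height_eq_of_angle_eq_two_pi (h : IsSolution κ z θ) (hκ : 0 < κ) (hθ0 : θ 0 = 0)
    (hz0 : 0 < z 0) {T : ℝ} (hθT : θ T = 2 * π) : z T = z 0 := by
  have hE := energy_eq h T 0
  rw [hθT, hθ0, cos_two_pi, cos_zero] at hE
  have hpos := hz0.trans_le (height_zero_le h hκ hθ0 hz0 T)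
  exact (sq_eq_sq₀ hpos.le hz0.le).1 (mul_left_cancel₀ hκ.ne' (by linarith))

end KappaCurve

/-- Sessile case: for κ > 0 and z₀ > 0 there exists T > 0 with
θ(T) = 2π such that the solution is invariant under the horizontal translation by
(x(T), 0): x(s+T) = x(s) + x(T), z(s+T) = z(s), θ(s+T) = θ(s) + 2π. -/
theorem stmt_4 (κ : ℝ) (hκ : 0 < κ) (z₀ : ℝ) (hz₀ : 0 < z₀) (x z θ : ℝ → ℝ)
    (hx : Differentiable ℝ x) (hz : Differentiable ℝ z) (hθ : Differentiable ℝ θ)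
    (hode : ∀ s : ℝ, deriv x s = Real.cos (θ s) ∧ deriv z s = Real.sin (θ s) ∧
      deriv θ s = κ * z s)
    (hx0 : x 0 = 0) (hθ0 : θ 0 = 0) (hz0 : z 0 = z₀) :
    ∃ T : ℝ, 0 < T ∧ θ T = 2 * Real.pi ∧
      ∀ s : ℝ,
        x (s + T) = x s + x T ∧
        z (s + T) = z s ∧
        θ (s + T) = θ s + 2 * Real.pi := by
  have hxD : ∀ s, HasDerivAt x (cos (θ s)) s := fun s => (hode s).1 ▸ (hx s).hasDerivAt
  have hsol : KappaCurve.IsSolution κ z θ := fun s =>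
    ⟨(hode s).2.1 ▸ (hz s).hasDerivAt, (hode s).2.2 ▸ (hθ s).hasDerivAt⟩
  have hz0pos : 0 < z 0 := hz0 ▸ hz₀
  obtain ⟨T, hT, hθT⟩ := KappaCurve.exists_angle_eq_two_pi hsol hκ hθ0 hz0pos
  have hper := KappaCurve.shift_eq_of_return hsol
    (KappaCurve.height_eq_of_angle_eq_two_pi hsol hκ hθ0 hz0pos hθT) (by rw [hθT, hθ0, zero_add])
  refine ⟨T, hT, hθT, fun s => ⟨?_, hper s⟩⟩
  have hcos : Function.Periodic (fun s => cos (θ s)) T := fun s => by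
    simp only [(hper s).2, cos_add_two_pi]
  have hx := add_sub_eq_of_hasDerivAt_of_periodic hxD hcos s
  rw [hx0, sub_zero] at hx
  linear_combination hx
end

section
/- Let κ > 0 and let (x, z, θ) be the solution of the system (P) on ℝ with x(0) = 0, θ(0) = 0 and z(0) = z₀ > 0. Then the height function z satisfies z₀ ≤ z(s) ≤ √(4/κ + z₀²) for all s ∈ ℝ, and both bounds are achieved, i.e. there exist s₁, s₂ ∈ ℝ with z(s₁) = z₀ and z(s₂) = √(4/κ + z₀²). -/
/-! The quantity `cos θ + κ z² / 2` is a first integral of (P), equal to `1 + κ z₀² / 2`.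
Since `cos θ ∈ [-1, 1]` this confines `z²` to `[z₀², 4/κ + z₀²]`, and `z`, never vanishing,
stays positive. Hence `θ' = κ z ≥ κ z₀ > 0`, so `θ` passes through `π`, where `z²` attains
the upper bound; the lower bound is attained at `s = 0`. -/

open Real

theorem cos_add_mul_sq_eq_of_deriv {κ : ℝ} {z θ : ℝ → ℝ} (hz : Differentiable ℝ z)
    (hθ : Differentiable ℝ θ) (hz' : ∀ s, deriv z s = sin (θ s))
    (hθ' : ∀ s, deriv θ s = κ * z s) (s : ℝ) :
    cos (θ s) + κ / 2 * z s ^ 2 = cos (θ 0) + κ / 2 * z 0 ^ 2 := by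
  have hE : ∀ t, HasDerivAt (fun t => cos (θ t) + κ / 2 * z t ^ 2) 0 t := by
    intro t
    have h := ((hasDerivAt_cos (θ t)).comp t (hθ t).hasDerivAt).add
      (((hz t).hasDerivAt.pow 2).const_mul (κ / 2))
    refine h.congr_deriv ?_
    rw [hz', hθ']
    push_cast
    ring
  exact is_const_of_deriv_eq_zero (fun t => (hE t).differentiableAt) (fun t => (hE t).deriv) s 0

theorem Continuous.pos_of_ne_zero {X : Type*} [TopologicalSpace X] [PreconnectedSpace X]
    {f : X → ℝ} (hf : Continuous f) (hne : ∀ x, f x ≠ 0) {a : X} (ha : 0 < f a) (x : X) :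
    0 < f x := by
  by_contra! hx
  obtain ⟨y, hy⟩ := intermediate_value_univ x a hf ⟨hx, ha.le⟩
  exact hne y hy

theorem exists_eq_of_pos_le_deriv {f : ℝ → ℝ} (hf : Differentiable ℝ f) {C : ℝ} (hC : 0 < C)
    (hf' : ∀ s, C ≤ deriv f s) {a y : ℝ} (hy : f a ≤ y) : ∃ s, f s = y := by
  set b := a + (y - f a) / C
  have hab : a ≤ b := le_add_of_nonneg_right (div_nonneg (sub_nonneg.2 hy) hC.le)
  have hgrowth := mul_sub_le_image_sub_of_le_deriv hf hf' hab
  have hfb : y ≤ f b := by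
    have : C * (b - a) = y - f a := by simp only [b]; field_simp; ring
    linarith
  exact intermediate_value_univ a b hf.continuous ⟨hy, hfb⟩

theorem stmt_5_general (κ : ℝ) (hκ : 0 < κ) (z₀ : ℝ) (hz₀ : 0 < z₀) (x z θ : ℝ → ℝ)
    (hz : Differentiable ℝ z) (hθ : Differentiable ℝ θ)
    (hode : ∀ s : ℝ, deriv x s = Real.cos (θ s) ∧ deriv z s = Real.sin (θ s) ∧
      deriv θ s = κ * z s)
    (hθ0 : θ 0 = 0) (hz0 : z 0 = z₀) :
    (∀ s : ℝ, z₀ ≤ z s ∧ z s ≤ Real.sqrt (4 / κ + z₀ ^ 2)) ∧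
    (∃ s₁ : ℝ, z s₁ = z₀) ∧
    (∃ s₂ : ℝ, z s₂ = Real.sqrt (4 / κ + z₀ ^ 2)) := by
  have hθ' s := (hode s).2.2
  have henergy s : cos (θ s) + κ / 2 * z s ^ 2 = 1 + κ / 2 * z₀ ^ 2 := by
    simpa [hθ0, hz0] using cos_add_mul_sq_eq_of_deriv hz hθ (fun s => (hode s).2.1) hθ' s
  have hsq_lb s : z₀ ^ 2 ≤ z s ^ 2 := by nlinarith [henergy s, cos_le_one (θ s)]
  have hsq_ub s : z s ^ 2 ≤ 4 / κ + z₀ ^ 2 := by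
    have : 4 / κ * κ = 4 := div_mul_cancel₀ 4 hκ.ne'
    nlinarith [henergy s, neg_one_le_cos (θ s)]
  have hpos : ∀ s, 0 < z s :=
    hz.continuous.pos_of_ne_zero (fun s hs => by nlinarith [hsq_lb s]) (hz0 ▸ hz₀)
  have hlb s : z₀ ≤ z s := by nlinarith [hsq_lb s, hpos s]
  refine ⟨fun s => ⟨hlb s, (le_abs_self _).trans (abs_le_sqrt (hsq_ub s))⟩, ⟨0, hz0⟩, ?_⟩
  obtain ⟨s₂, hs₂⟩ : ∃ s, θ s = π :=
    exists_eq_of_pos_le_deriv hθ (mul_pos hκ hz₀)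
      (fun s => hθ' s ▸ mul_le_mul_of_nonneg_left (hlb s) hκ.le) (hθ0 ▸ pi_pos.le)
  have hz₂ : z s₂ ^ 2 = 4 / κ + z₀ ^ 2 := by
    have h := henergy s₂
    rw [hs₂, cos_pi] at h
    field_simp at h ⊢
    linarith
  exact ⟨s₂, by rw [← hz₂, sqrt_sq (hpos s₂).le]⟩

/-- for κ > 0 and z₀ > 0, the height satisfies
z₀ ≤ z(s) ≤ √(4/κ + z₀²) for all s, and both bounds are achieved. -/
theorem stmt_5 (κ : ℝ) (hκ : 0 < κ) (z₀ : ℝ) (hz₀ : 0 < z₀) (x z θ : ℝ → ℝ)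
    (hx : Differentiable ℝ x) (hz : Differentiable ℝ z) (hθ : Differentiable ℝ θ)
    (hode : ∀ s : ℝ, deriv x s = Real.cos (θ s) ∧ deriv z s = Real.sin (θ s) ∧
      deriv θ s = κ * z s)
    (hx0 : x 0 = 0) (hθ0 : θ 0 = 0) (hz0 : z 0 = z₀) :
    (∀ s : ℝ, z₀ ≤ z s ∧ z s ≤ Real.sqrt (4 / κ + z₀ ^ 2)) ∧
    (∃ s₁ : ℝ, z s₁ = z₀) ∧
    (∃ s₂ : ℝ, z s₂ = Real.sqrt (4 / κ + z₀ ^ 2)) :=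
  stmt_5_general κ hκ z₀ hz₀ x z θ hz hθ hode hθ0 hz0
end

section
/- (Pendent case, deep initial height) Let κ < 0 and let (x, z, θ) be the solution of the system (P) on ℝ with x(0) = 0, θ(0) = 0 and z(0) = z₀ < −2/√(−κ). Then z(s) < 0 for all s, the bounds z₀ ≤ z(s) ≤ −√(z₀² + 4/κ) hold and are both achieved, and there exists T > 0 such that for all s ∈ ℝ: x(s + T) = x(s) + x(T), z(s + T) = z(s), and θ(s + T) = θ(s) + 2π. In particular z is periodic and the surface is invariant under a group of horizontal translations. -/
/-!
Along a solution the energy `κ z² + 2 cos θ` is conserved, which pins `z²` between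
`z₀² + 4/κ > 0` and `z₀²`; hence `z` never vanishes and stays negative. Then
`θ' = κ z ≥ -κ √(z₀² + 4/κ) > 0`, so `θ` reaches `π` (where `z = -√(z₀² + 4/κ)`) and `2π` at
some `T > 0` (where `z = z₀`). At `T` the pair `(z, θ - 2π)` is back at its initial value, so
uniqueness for the globally Lipschitz system `z' = sin θ`, `θ' = κ z` makes the solution
`T`-periodic up to the shift of `θ` by `2π`; finally `x(s + T) - x(s)` is constant because
`x' = cos θ` is `T`-periodic.
-/

open Real

theorem Continuous.neg_of_ne_zero {X : Type*} [TopologicalSpace X] [PreconnectedSpace X]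
    {f : X → ℝ} (hf : Continuous f) (h0 : ∀ x, f x ≠ 0) {a : X} (ha : f a < 0) (x : X) :
    f x < 0 := by
  by_contra! hx
  obtain ⟨y, hy⟩ := intermediate_value_univ a x hf ⟨ha.le, hx⟩
  exact h0 y hy

theorem Function.Periodic.add_period_sub_eq_of_hasDerivAt {f f' : ℝ → ℝ} {T : ℝ}
    (hp : Function.Periodic f' T) (hf : ∀ s, HasDerivAt f (f' s) s) (s : ℝ) :
    f (s + T) - f s = f T - f 0 := by
  have hd : ∀ s, HasDerivAt (fun s => f (s + T) - f s) 0 s := fun s =>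
    (((hf (s + T)).comp_add_const s T).sub (hf s)).congr_deriv (by rw [hp, sub_self])
  simpa using
    is_const_of_deriv_eq_zero (fun s => (hd s).differentiableAt) (fun s => (hd s).deriv) s 0

theorem exists_gt_eq_of_le_deriv {f : ℝ → ℝ} (hf : Differentiable ℝ f) {c : ℝ} (hc : 0 < c)
    (hle : ∀ x, c ≤ deriv f x) {a y : ℝ} (hy : f a < y) : ∃ t, a < t ∧ f t = y := by
  set b := a + (y - f a) / c
  have hab : a ≤ b := le_add_of_nonneg_right (div_nonneg (sub_nonneg.2 hy.le) hc.le)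
  have hfb : y ≤ f b := by
    have := mul_sub_le_image_sub_of_le_deriv hf hle hab
    rw [add_sub_cancel_left, mul_div_cancel₀ _ hc.ne'] at this
    linarith
  obtain ⟨t, ht, hft⟩ := intermediate_value_Icc hab hf.continuous.continuousOn ⟨hy.le, hfb⟩
  exact ⟨t, lt_of_le_of_ne ht.1 (by rintro rfl; linarith), hft⟩

/-- The `(z, θ)`-part of system (P). -/
def IsPendulumSolution (κ : ℝ) (z θ : ℝ → ℝ) : Prop :=
  ∀ s, HasDerivAt z (sin (θ s)) s ∧ HasDerivAt θ (κ * z s) s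

namespace IsPendulumSolution

variable {κ : ℝ} {z θ : ℝ → ℝ}

theorem energy_eq (h : IsPendulumSolution κ z θ) (s t : ℝ) :
    κ * z s ^ 2 + 2 * cos (θ s) = κ * z t ^ 2 + 2 * cos (θ t) := by
  have hE : ∀ s, HasDerivAt (fun s => κ * z s ^ 2 + 2 * cos (θ s)) 0 s := fun s =>
    ((((h s).1.pow 2).const_mul κ).add (((h s).2.cos).const_mul 2)).congr_deriv (by ring)
  exact is_const_of_deriv_eq_zero (fun s => (hE s).differentiableAt) (fun s => (hE s).deriv) s t

theorem sq_eq (h : IsPendulumSolution κ z θ) (hκ : κ ≠ 0) (s t : ℝ) :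
    z s ^ 2 = z t ^ 2 + 2 * (cos (θ t) - cos (θ s)) / κ := by
  field_simp
  linarith [h.energy_eq s t]

theorem sq_bounds (h : IsPendulumSolution κ z θ) (hκ : κ < 0) (hθ : θ 0 = 0) (s : ℝ) :
    z 0 ^ 2 + 4 / κ ≤ z s ^ 2 ∧ z s ^ 2 ≤ z 0 ^ 2 := by
  rw [h.sq_eq hκ.ne s 0, hθ, cos_zero]
  constructor
  · have := neg_one_le_cos (θ s)
    linarith [div_le_div_of_nonpos_of_le hκ.le (by linarith : 2 * (1 - cos (θ s)) ≤ 4)]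
  · have := cos_le_one (θ s)
    exact add_le_of_nonpos_right (div_nonpos_of_nonneg_of_nonpos (by linarith) hκ.le)

theorem comp_add (h : IsPendulumSolution κ z θ) (T : ℝ) :
    IsPendulumSolution κ (fun s => z (s + T)) (fun s => θ (s + T)) := fun s =>
  ⟨(h (s + T)).1.comp_add_const s T, (h (s + T)).2.comp_add_const s T⟩

theorem sub_two_pi (h : IsPendulumSolution κ z θ) :
    IsPendulumSolution κ z (fun s => θ s - 2 * π) := fun s =>
  ⟨by simpa only [sin_sub_two_pi] using (h s).1, (h s).2.sub_const _⟩

theorem eq_of_eq {z' θ' : ℝ → ℝ} (h : IsPendulumSolution κ z θ)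
    (h' : IsPendulumSolution κ z' θ') {t₀ : ℝ} (hz : z t₀ = z' t₀) (hθ : θ t₀ = θ' t₀) :
    z = z' ∧ θ = θ' := by
  have hlip : LipschitzWith (max 1 ‖κ‖₊) fun p : ℝ × ℝ => (sin p.2, κ * p.1) := by
    simpa only [mul_one, Function.comp_def, smul_eq_mul] using
      (lipschitzWith_sin.comp (LipschitzWith.prod_snd (α := ℝ) (β := ℝ))).prodMk
        ((lipschitzWith_smul κ).comp (LipschitzWith.prod_fst (α := ℝ) (β := ℝ)))
  have hunique := ODE_solution_unique_univ (v := fun _ p => (sin p.2, κ * p.1))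
    (s := fun _ => Set.univ) (f := fun t => (z t, θ t)) (g := fun t => (z' t, θ' t))
    (fun _ => hlip.lipschitzOnWith) (fun t => ⟨(h t).1.prodMk (h t).2, trivial⟩)
    (fun t => ⟨(h' t).1.prodMk (h' t).2, trivial⟩) (Prod.ext hz hθ)
  exact ⟨funext fun t => congrArg Prod.fst (congrFun hunique t),
    funext fun t => congrArg Prod.snd (congrFun hunique t)⟩

theorem periodic (h : IsPendulumSolution κ z θ) {T : ℝ} (hz : z T = z 0)
    (hθ : θ T = θ 0 + 2 * π) (s : ℝ) :
    z (s + T) = z s ∧ θ (s + T) = θ s + 2 * π := by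
  obtain ⟨hz', hθ'⟩ :=
    (h.comp_add T).sub_two_pi.eq_of_eq h (t₀ := 0) (by simpa using hz) (by simp [hθ])
  exact ⟨congrFun hz' s, by linarith [congrFun hθ' s]⟩

end IsPendulumSolution

theorem neg_and_sq_add_four_div_pos {κ z₀ : ℝ} (hκ : κ < 0) (hz₀ : z₀ < -2 / √(-κ)) :
    z₀ < 0 ∧ 0 < z₀ ^ 2 + 4 / κ := by
  have hr : 0 < √(-κ) := sqrt_pos.2 (neg_pos.2 hκ)
  have hr2 : √(-κ) ^ 2 = -κ := sq_sqrt (neg_nonneg.2 hκ.le)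
  have h : z₀ * √(-κ) < -2 := by rwa [lt_div_iff₀ hr] at hz₀
  refine ⟨by nlinarith, ?_⟩
  have h4 : 4 / -κ < z₀ ^ 2 := by rw [div_lt_iff₀ (neg_pos.2 hκ), ← hr2]; nlinarith
  rw [div_neg] at h4
  linarith

/-- Pendent case, deep initial height: for κ < 0 and
z₀ < −2/√(−κ), one has z < 0 everywhere, the bounds
z₀ ≤ z(s) ≤ −√(z₀² + 4/κ) hold and are achieved, and the solution is
invariant under a horizontal translation: there is T > 0 with
x(s+T) = x(s) + x(T), z(s+T) = z(s), θ(s+T) = θ(s) + 2π. -/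
theorem stmt_6 (κ : ℝ) (hκ : κ < 0) (z₀ : ℝ)
    (hz₀ : z₀ < -2 / Real.sqrt (-κ)) (x z θ : ℝ → ℝ)
    (hx : Differentiable ℝ x) (hz : Differentiable ℝ z) (hθ : Differentiable ℝ θ)
    (hode : ∀ s : ℝ, deriv x s = Real.cos (θ s) ∧ deriv z s = Real.sin (θ s) ∧
      deriv θ s = κ * z s)
    (hx0 : x 0 = 0) (hθ0 : θ 0 = 0) (hz0 : z 0 = z₀) :
    (∀ s : ℝ, z s < 0) ∧
    (∀ s : ℝ, z₀ ≤ z s ∧ z s ≤ -Real.sqrt (z₀ ^ 2 + 4 / κ)) ∧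
    (∃ s₁ : ℝ, z s₁ = z₀) ∧
    (∃ s₂ : ℝ, z s₂ = -Real.sqrt (z₀ ^ 2 + 4 / κ)) ∧
    (∃ T : ℝ, 0 < T ∧
      ∀ s : ℝ,
        x (s + T) = x s + x T ∧
        z (s + T) = z s ∧
        θ (s + T) = θ s + 2 * Real.pi) := by
  have hsol : IsPendulumSolution κ z θ := fun s =>
    ⟨(hode s).2.1 ▸ (hz s).hasDerivAt, (hode s).2.2 ▸ (hθ s).hasDerivAt⟩
  obtain ⟨hz₀_neg, hm_pos⟩ := neg_and_sq_add_four_div_pos hκ hz₀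
  set m := √(z₀ ^ 2 + 4 / κ)
  have hm : 0 < m := sqrt_pos.2 hm_pos
  have hm_sq : m ^ 2 = z₀ ^ 2 + 4 / κ := sq_sqrt hm_pos.le
  have hbounds := hsol.sq_bounds hκ hθ0
  rw [hz0] at hbounds
  have hneg : ∀ s, z s < 0 := hz.continuous.neg_of_ne_zero
    (fun s hs => by nlinarith [(hbounds s).1]) (hz0 ▸ hz₀_neg)
  have hupper : ∀ s, z s ≤ -m := fun s => by nlinarith [(hbounds s).1, hneg s]
  have hlower : ∀ s, z₀ ≤ z s := fun s => by nlinarith [(hbounds s).2, hneg s]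
  have hθ' : ∀ s, -κ * m ≤ deriv θ s := fun s => by rw [(hode s).2.2]; nlinarith [hupper s]
  have hc : 0 < -κ * m := mul_pos (neg_pos.2 hκ) hm
  obtain ⟨s₂, -, hθs₂⟩ := exists_gt_eq_of_le_deriv hθ hc hθ' (a := 0) (y := π)
    (by rw [hθ0]; exact pi_pos)
  obtain ⟨T, hT, hθT⟩ := exists_gt_eq_of_le_deriv hθ hc hθ' (a := 0) (y := 2 * π)
    (by rw [hθ0]; positivity)
  have hzs₂ : z s₂ = -m := by
    have := hsol.sq_eq hκ.ne s₂ 0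
    rw [hθs₂, hθ0, hz0, cos_pi, cos_zero] at this
    nlinarith [hneg s₂]
  have hzT : z T = z 0 := by
    have := hsol.sq_eq hκ.ne T 0
    rw [hθT, hθ0, cos_two_pi, cos_zero, sub_self, mul_zero, zero_div, add_zero] at this
    nlinarith [hneg T, hneg 0]
  have hper := hsol.periodic hzT (by rw [hθT, hθ0, zero_add])
  have hcos_per : Function.Periodic (fun s => cos (θ s)) T := fun s => by
    simp only [(hper s).2, cos_add_two_pi]
  refine ⟨hneg, fun s => ⟨hlower s, hupper s⟩, ⟨0, hz0⟩, ⟨s₂, hzs₂⟩, T, hT,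
    fun s => ⟨?_, (hper s).1, (hper s).2⟩⟩
  have := hcos_per.add_period_sub_eq_of_hasDerivAt (fun s => (hode s).1 ▸ (hx s).hasDerivAt) s
  rw [hx0] at this
  linarith
end

section
/- (Pendent case, critical initial height) Let κ < 0 and let (x, z, θ) be the solution of the system (P) on ℝ with x(0) = 0, θ(0) = 0 and z(0) = z₀ = −2/√(−κ). Then z₀ ≤ z(s) < 0 for all s ∈ ℝ, the function z is strictly increasing on [0, ∞), and lim_{s→∞} z(s) = 0. -/
/-!
With `κ = -r²`, the solution is explicit: `z(s) = -2 / (r cosh (r s))` and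
`θ(s) = 2 arctan (sinh (r s))`, twice the Gudermannian function of `r s`. Both pairs solve the
Lipschitz system `z' = sin θ`, `θ' = κ z` with the same initial data, so they coincide, and the
claims reduce to elementary properties of `cosh`.
-/

open Real Set Filter Topology

namespace Real

lemma sqrt_one_add_sinh_sq (u : ℝ) : √(1 + sinh u ^ 2) = cosh u := by
  rw [← cosh_sq', sqrt_sq (cosh_pos u).le]

lemma sin_two_mul_arctan_sinh (u : ℝ) : sin (2 * arctan (sinh u)) = 2 * sinh u / cosh u ^ 2 := by
  rw [sin_two_mul, sin_arctan, cos_arctan, sqrt_one_add_sinh_sq]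
  field_simp

lemma hasDerivAt_arctan_sinh (u : ℝ) :
    HasDerivAt (fun v ↦ arctan (sinh v)) (cosh u)⁻¹ u := by
  convert (hasDerivAt_sinh u).arctan using 1
  rw [← cosh_sq']
  field_simp [(cosh_pos u).ne']

lemma tendsto_cosh_atTop : Tendsto cosh atTop atTop :=
  tendsto_atTop_mono (fun u ↦ by rw [cosh_eq]; linarith [exp_pos (-u)])
    (tendsto_exp_atTop.atTop_div_const two_pos)

end Real

theorem pendulum_solution_unique {κ t₀ : ℝ} {z θ Z Θ : ℝ → ℝ}
    (hsol : ∀ s, HasDerivAt z (sin (θ s)) s ∧ HasDerivAt θ (κ * z s) s)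
    (hSol : ∀ s, HasDerivAt Z (sin (Θ s)) s ∧ HasDerivAt Θ (κ * Z s) s)
    (hz : z t₀ = Z t₀) (hθ : θ t₀ = Θ t₀) : z = Z ∧ θ = Θ := by
  have hv : LipschitzWith (max 1 ‖κ‖₊) fun p : ℝ × ℝ ↦ (sin p.2, κ * p.1) := by
    simpa only [mul_one, smul_eq_mul, Function.comp_def] using
      (lipschitzWith_sin.comp LipschitzWith.prod_snd).prodMk
        ((lipschitzWith_smul (β := ℝ) κ).comp LipschitzWith.prod_fst)
  have h := ODE_solution_unique_univ (v := fun _ p ↦ (sin p.2, κ * p.1)) (s := fun _ ↦ univ)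
    (f := fun s ↦ (z s, θ s)) (g := fun s ↦ (Z s, Θ s)) (t₀ := t₀)
    (fun _ ↦ hv.lipschitzOnWith) (fun s ↦ ⟨(hsol s).1.prodMk (hsol s).2, trivial⟩)
    (fun s ↦ ⟨(hSol s).1.prodMk (hSol s).2, trivial⟩) (Prod.ext hz hθ)
  exact ⟨funext fun s ↦ congrArg Prod.fst (congrFun h s),
    funext fun s ↦ congrArg Prod.snd (congrFun h s)⟩

namespace CriticalPendent

variable {r : ℝ}

noncomputable def height (r s : ℝ) : ℝ := -2 / (r * cosh (r * s))

noncomputable def angle (r s : ℝ) : ℝ := 2 * arctan (sinh (r * s))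

lemma height_zero (r : ℝ) : height r 0 = -2 / r := by
  simp [height]

lemma angle_zero (r : ℝ) : angle r 0 = 0 := by
  simp [angle]

lemma hasDerivAt_height (hr : r ≠ 0) (s : ℝ) : HasDerivAt (height r) (sin (angle r s)) s := by
  have hden : HasDerivAt (fun t ↦ r * cosh (r * t)) (r * (sinh (r * s) * r)) s :=
    ((hasDerivAt_cosh _).comp s (hasDerivAt_const_mul r)).const_mul r
  refine ((hasDerivAt_const s (-2 : ℝ)).div hden (mul_ne_zero hr (cosh_pos _).ne')).congr_deriv ?_
  unfold angle
  rw [sin_two_mul_arctan_sinh]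
  field_simp
  ring

lemma hasDerivAt_angle (hr : r ≠ 0) (s : ℝ) :
    HasDerivAt (angle r) (-r ^ 2 * height r s) s := by
  refine (((hasDerivAt_arctan_sinh (r * s)).comp s
    (hasDerivAt_const_mul r)).const_mul 2).congr_deriv ?_
  unfold height
  field_simp [(cosh_pos (r * s)).ne']

variable (hr : 0 < r)
include hr

lemma height_neg (s : ℝ) : height r s < 0 :=
  div_neg_of_neg_of_pos (by norm_num) (mul_pos hr (cosh_pos _))

lemma height_zero_le_height (s : ℝ) : height r 0 ≤ height r s := by
  rw [height, height, div_le_div_iff₀ (mul_pos hr (cosh_pos _)) (mul_pos hr (cosh_pos _)),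
    mul_zero, cosh_zero]
  nlinarith [one_le_cosh (r * s)]

lemma strictMonoOn_height : StrictMonoOn (height r) (Ici 0) := by
  intro s hs t ht hst
  have hcosh : cosh (r * s) < cosh (r * t) :=
    cosh_strictMonoOn (mul_nonneg hr.le hs) (mul_nonneg hr.le ht) (mul_lt_mul_of_pos_left hst hr)
  rw [height, height, div_lt_div_iff₀ (mul_pos hr (cosh_pos _)) (mul_pos hr (cosh_pos _))]
  nlinarith

lemma tendsto_height_atTop : Tendsto (height r) atTop (𝓝 0) :=
  tendsto_const_nhds.div_atTop <| (tendsto_cosh_atTop.comp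
    (tendsto_id.const_mul_atTop hr)).const_mul_atTop hr

end CriticalPendent

open CriticalPendent in
theorem stmt_7_general (κ : ℝ) (hκ : κ < 0) (z₀ : ℝ)
    (hz₀ : z₀ = -2 / Real.sqrt (-κ)) (x z θ : ℝ → ℝ)
    (hz : Differentiable ℝ z) (hθ : Differentiable ℝ θ)
    (hode : ∀ s : ℝ, deriv x s = Real.cos (θ s) ∧ deriv z s = Real.sin (θ s) ∧
      deriv θ s = κ * z s)
    (hθ0 : θ 0 = 0) (hz0 : z 0 = z₀) :
    (∀ s : ℝ, z₀ ≤ z s ∧ z s < 0) ∧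
    StrictMonoOn z (Set.Ici (0 : ℝ)) ∧
    Filter.Tendsto z Filter.atTop (nhds 0) := by
  set r := √(-κ)
  have hr : 0 < r := sqrt_pos.2 (neg_pos.2 hκ)
  have hκr : κ = -r ^ 2 := by rw [sq_sqrt (neg_pos.2 hκ).le, neg_neg]
  have hsol (s : ℝ) : HasDerivAt z (sin (θ s)) s ∧ HasDerivAt θ (κ * z s) s :=
    ⟨(hode s).2.1 ▸ (hz s).hasDerivAt, (hode s).2.2 ▸ (hθ s).hasDerivAt⟩
  have hcrit (s : ℝ) : HasDerivAt (height r) (sin (angle r s)) s ∧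
      HasDerivAt (angle r) (κ * height r s) s :=
    ⟨hasDerivAt_height hr.ne' s, hκr ▸ hasDerivAt_angle hr.ne' s⟩
  have hz_eq : z = height r := (pendulum_solution_unique hsol hcrit
    (by rw [hz0, hz₀, height_zero]) (by rw [hθ0, angle_zero])).1
  rw [hz₀, ← height_zero r, hz_eq]
  exact ⟨fun s ↦ ⟨height_zero_le_height hr s, height_neg hr s⟩, strictMonoOn_height hr,
    tendsto_height_atTop hr⟩

/-- Pendent case, critical initial height: for κ < 0 and
z₀ = −2/√(−κ), one has z₀ ≤ z(s) < 0 for all s, z is strictly increasing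
on [0, ∞), and z(s) → 0 as s → ∞. -/
theorem stmt_7 (κ : ℝ) (hκ : κ < 0) (z₀ : ℝ)
    (hz₀ : z₀ = -2 / Real.sqrt (-κ)) (x z θ : ℝ → ℝ)
    (hx : Differentiable ℝ x) (hz : Differentiable ℝ z) (hθ : Differentiable ℝ θ)
    (hode : ∀ s : ℝ, deriv x s = Real.cos (θ s) ∧ deriv z s = Real.sin (θ s) ∧
      deriv θ s = κ * z s)
    (hx0 : x 0 = 0) (hθ0 : θ 0 = 0) (hz0 : z 0 = z₀) :
    (∀ s : ℝ, z₀ ≤ z s ∧ z s < 0) ∧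
    StrictMonoOn z (Set.Ici (0 : ℝ)) ∧
    Filter.Tendsto z Filter.atTop (nhds 0) :=
  stmt_7_general κ hκ z₀ hz₀ x z θ hz hθ hode hθ0 hz0
end

section
/- (Pendent case, shallow initial height) Let κ < 0 and let (x, z, θ) be the solution of the system (P) on ℝ with x(0) = 0, θ(0) = 0 and z(0) = z₀ satisfying −2/√(−κ) < z₀ < 0. Then z vanishes at some point, z₀ ≤ z(s) ≤ −z₀ for all s with both extrema achieved, and the solution is periodic in the sense that there exists T > 0 with x(s + T) = x(s) + x(T), z(s + T) = z(s), and θ(s + T) = θ(s) for all s ∈ ℝ. -/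
/-!
The energy `cos θ + κ z² / 2` is conserved. Since `κ < 0` it bounds `z²` by `z₀²`, and the
shallowness condition `z₀ > -2/√(-κ)` says exactly that the energy exceeds `-1`, so `cos θ > -1`
and `θ` never reaches `±π`. While `z < 0` the angle increases, so `z' = sin θ` stays bounded
below by a positive constant and `z` must reach `0` at some `s₀ > 0`. The `(z, θ)`-system is
reversible: by uniqueness, `z` is even and `θ` odd about `0` (where `θ = 0`), and `z` is odd and
`θ` even about `s₀` (where `z = 0`). Composing the two reflections shows that `z` and `θ` are
`2 s₀`-antiperiodic, hence `4 s₀`-periodic, and then `x(s + 4 s₀) - x(s)` has derivative `0`.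
-/

open Real Set Function

def IsHeightAngleSolution (κ : ℝ) (z θ : ℝ → ℝ) : Prop :=
  ∀ s, HasDerivAt z (sin (θ s)) s ∧ HasDerivAt θ (κ * z s) s

lemma lipschitzWith_heightAngleField_s8 (κ : ℝ) :
    LipschitzWith (max 1 ‖κ‖₊) fun p : ℝ × ℝ => (sin p.2, κ * p.1) :=
  (lipschitzWith_sin.comp LipschitzWith.prod_snd).prodMk
    ((lipschitzWith_smul κ).comp LipschitzWith.prod_fst) |>.weaken (by simp)

lemma one_sub_cos_mul_one_add_cos_le_sin {y : ℝ} (hy : 0 ≤ sin y) :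
    (1 - cos y) * (1 + cos y) ≤ sin y := by
  nlinarith [sin_sq_add_cos_sq y, sin_le_one y]

lemma abs_lt_pi_of_neg_one_lt_cos {θ : ℝ → ℝ} (hθ : Continuous θ) {a : ℝ} (ha : |θ a| < π)
    (hcos : ∀ s, -1 < cos (θ s)) (s : ℝ) : |θ s| < π := by
  by_contra! hs
  obtain ⟨y, hy, hyπ⟩ : ∃ y ∈ uIcc (θ a) (θ s), |y| = π := by
    rcases le_abs'.1 hs with h | h
    · exact ⟨-π, mem_uIcc.2 (Or.inr ⟨h, (neg_lt_of_abs_lt ha).le⟩), by simp [pi_pos.le]⟩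
    · exact ⟨π, mem_uIcc.2 (Or.inl ⟨(lt_of_abs_lt ha).le, h⟩), abs_of_pos pi_pos⟩
  obtain ⟨t, -, rfl⟩ := intermediate_value_uIcc hθ.continuousOn hy
  have := hcos t
  rw [← cos_abs, hyπ, cos_pi] at this
  exact lt_irrefl _ this

lemma sub_eq_sub_of_hasDerivAt_of_periodic {E : Type*} [NormedAddCommGroup E] [NormedSpace ℝ E]
    {f g : ℝ → E} {T : ℝ} (hf : ∀ s, HasDerivAt f (g s) s) (hg : Periodic g T) (s : ℝ) :
    f (s + T) - f s = f T - f 0 := by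
  have hD : ∀ u, HasDerivAt (fun u => f (u + T) - f u) 0 u := fun u => by
    have := ((hf (u + T)).comp_add_const u T).sub (hf u)
    rwa [hg u, sub_self] at this
  simpa using is_const_of_deriv_eq_zero (fun u => (hD u).differentiableAt)
    (fun u => (hD u).deriv) s 0

lemma neg_one_lt_one_add_mul_sq_div_two {κ z₀ : ℝ} (hκ : κ < 0) (hz₀ : -2 / √(-κ) < z₀)
    (hz₀' : z₀ < 0) : -1 < 1 + κ * z₀ ^ 2 / 2 := by
  have hr : 0 < √(-κ) := sqrt_pos.2 (neg_pos.2 hκ)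
  have hsq : √(-κ) ^ 2 = -κ := sq_sqrt (neg_nonneg.2 hκ.le)
  have h2 : -z₀ * √(-κ) < 2 := by
    rw [neg_div, neg_lt] at hz₀
    exact (lt_div_iff₀ hr).1 hz₀
  nlinarith [mul_nonneg (neg_nonneg.2 hz₀'.le) hr.le]

namespace IsHeightAngleSolution

variable {κ : ℝ} {z θ : ℝ → ℝ}

lemma continuous_angle (h : IsHeightAngleSolution κ z θ) : Continuous θ :=
  continuous_iff_continuousAt.2 fun s => (h s).2.continuousAt

lemma eq_of_eq_at {z' θ' : ℝ → ℝ} (h : IsHeightAngleSolution κ z θ)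
    (h' : IsHeightAngleSolution κ z' θ') {a : ℝ} (hz : z a = z' a) (hθ : θ a = θ' a) :
    z = z' ∧ θ = θ' := by
  have := ODE_solution_unique_univ (v := fun _ p => (sin p.2, κ * p.1)) (s := fun _ => univ)
    (fun _ => (lipschitzWith_heightAngleField_s8 κ).lipschitzOnWith)
    (fun t => ⟨(h t).1.prodMk (h t).2, trivial⟩) (fun t => ⟨(h' t).1.prodMk (h' t).2, trivial⟩)
    (t₀ := a) (Prod.ext hz hθ)
  exact ⟨funext fun t => congrArg Prod.fst (congrFun this t),
    funext fun t => congrArg Prod.snd (congrFun this t)⟩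

lemma reflect_angle (h : IsHeightAngleSolution κ z θ) (c : ℝ) :
    IsHeightAngleSolution κ (fun s => z (c - s)) (fun s => -θ (c - s)) := fun s => by
  refine ⟨?_, ?_⟩
  · simpa [sin_neg] using (h (c - s)).1.comp_const_sub c s
  · have := ((h (c - s)).2.comp_const_sub c s).neg
    rwa [neg_neg] at this

lemma reflect_height (h : IsHeightAngleSolution κ z θ) (c : ℝ) :
    IsHeightAngleSolution κ (fun s => -z (c - s)) (fun s => θ (c - s)) := fun s => by
  refine ⟨?_, ?_⟩
  · have := ((h (c - s)).1.comp_const_sub c s).neg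
    rwa [neg_neg] at this
  · simpa using (h (c - s)).2.comp_const_sub c s

lemma symm_of_angle_eq_zero (h : IsHeightAngleSolution κ z θ) {a : ℝ} (ha : θ a = 0) (s : ℝ) :
    z (2 * a - s) = z s ∧ θ (2 * a - s) = -θ s := by
  have h2a : 2 * a - a = a := by ring
  obtain ⟨hz, hθ⟩ :=
    (h.reflect_angle (2 * a)).eq_of_eq_at h (a := a) (by rw [h2a]) (by simp [h2a, ha])
  exact ⟨congrFun hz s, by rw [← congrFun hθ s, neg_neg]⟩

lemma antisymm_of_height_eq_zero (h : IsHeightAngleSolution κ z θ) {b : ℝ} (hb : z b = 0)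
    (s : ℝ) : z (2 * b - s) = -z s ∧ θ (2 * b - s) = θ s := by
  have h2b : 2 * b - b = b := by ring
  obtain ⟨hz, hθ⟩ :=
    (h.reflect_height (2 * b)).eq_of_eq_at h (a := b) (by simp [h2b, hb]) (by rw [h2b])
  exact ⟨by rw [← congrFun hz s, neg_neg], congrFun hθ s⟩

lemma antiperiodic (h : IsHeightAngleSolution κ z θ) {a b : ℝ} (ha : θ a = 0) (hb : z b = 0) :
    Antiperiodic z (2 * (b - a)) ∧ Antiperiodic θ (2 * (b - a)) := by
  have hshift (s : ℝ) : s + 2 * (b - a) = 2 * b - (2 * a - s) := by ring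
  refine ⟨fun s => ?_, fun s => ?_⟩
  · rw [hshift, (h.antisymm_of_height_eq_zero hb _).1, (h.symm_of_angle_eq_zero ha s).1]
  · rw [hshift, (h.antisymm_of_height_eq_zero hb _).2, (h.symm_of_angle_eq_zero ha s).2]

lemma energy_eq (h : IsHeightAngleSolution κ z θ) (s t : ℝ) :
    cos (θ s) + κ * z s ^ 2 / 2 = cos (θ t) + κ * z t ^ 2 / 2 := by
  have hD : ∀ u, HasDerivAt (fun u => cos (θ u) + κ * z u ^ 2 / 2) 0 u := fun u => by
    refine ((h u).2.cos.add ((((h u).1.fun_pow 2).const_mul κ).div_const 2)).congr_deriv ?_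
    push_cast
    ring
  exact is_const_of_deriv_eq_zero (fun u => (hD u).differentiableAt) (fun u => (hD u).deriv) s t

lemma exists_pos_height_nonneg (h : IsHeightAngleSolution κ z θ) (hκ : κ < 0) (hθ0 : θ 0 = 0)
    {c : ℝ} (hc : -1 < c) (hcos : ∀ s, c ≤ cos (θ s)) : ∃ S, 0 < S ∧ 0 ≤ z S := by
  by_contra! hneg
  have hmono : StrictMonoOn θ (Ici 0) :=
    strictMonoOn_of_deriv_pos (convex_Ici 0) h.continuous_angle.continuousOn fun t ht => by
      rw [interior_Ici] at ht
      rw [(h t).2.deriv]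
      exact mul_pos_of_neg_of_neg hκ (hneg t ht)
  have hπ (s : ℝ) : θ s < π :=
    (abs_lt.1 (abs_lt_pi_of_neg_one_lt_cos h.continuous_angle (a := 0) (by simp [hθ0, pi_pos])
      (fun s => hc.trans_le (hcos s)) s)).2
  have hθ1 : 0 < θ 1 := hθ0 ▸ hmono self_mem_Ici (by norm_num : (1 : ℝ) ∈ Ici 0) one_pos
  set δ := (1 - cos (θ 1)) * (1 + c)
  have hδ : 0 < δ := by
    have := cos_lt_cos_of_nonneg_of_le_pi le_rfl (hπ 1).le hθ1
    rw [cos_zero] at this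
    exact mul_pos (by linarith) (by linarith)
  have hsin (s : ℝ) (hs : 1 ≤ s) : δ ≤ sin (θ s) := by
    have h1s : θ 1 ≤ θ s := hmono.monotoneOn (by norm_num : (1 : ℝ) ∈ Ici 0)
      (show s ∈ Ici 0 from zero_le_one.trans hs) hs
    have hcs : cos (θ s) ≤ cos (θ 1) := cos_le_cos_of_nonneg_of_le_pi hθ1.le (hπ s).le h1s
    calc δ ≤ (1 - cos (θ s)) * (1 + cos (θ s)) :=
          mul_le_mul (by linarith) (by linarith [hcos s]) (by linarith)
            (by linarith [cos_le_one (θ s)])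
      _ ≤ sin (θ s) := one_sub_cos_mul_one_add_cos_le_sin
          (sin_nonneg_of_nonneg_of_le_pi (hθ1.trans_le h1s).le (hπ s).le)
  have hgrowth := (convex_Ici 1).mul_sub_le_image_sub_of_le_deriv
    (fun t _ => (h t).1.continuousAt.continuousWithinAt)
    (fun t _ => (h t).1.differentiableAt.differentiableWithinAt)
    (fun t ht => by rw [(h t).1.deriv]; exact hsin t (interior_subset ht))
  have hz1 : z 1 < 0 := hneg 1 one_pos
  have hS : 1 ≤ 1 - z 1 / δ := (le_sub_self_iff 1).2 (div_nonpos_of_nonpos_of_nonneg hz1.le hδ.le)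
  have hgain : δ * (1 - z 1 / δ - 1) = -z 1 := by field_simp; ring
  linarith [hgrowth 1 self_mem_Ici (1 - z 1 / δ) hS hS, hneg (1 - z 1 / δ) (by linarith)]

end IsHeightAngleSolution

/-- Pendent case, shallow initial height: for κ < 0 and
−2/√(−κ) < z₀ < 0, the height z vanishes somewhere, z₀ ≤ z(s) ≤ −z₀ with both
extrema achieved, and the solution is periodic: there is T > 0 with
x(s+T) = x(s) + x(T), z(s+T) = z(s), θ(s+T) = θ(s). -/
theorem stmt_8 (κ : ℝ) (hκ : κ < 0) (z₀ : ℝ)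
    (hz₀l : -2 / Real.sqrt (-κ) < z₀) (hz₀u : z₀ < 0) (x z θ : ℝ → ℝ)
    (hx : Differentiable ℝ x) (hz : Differentiable ℝ z) (hθ : Differentiable ℝ θ)
    (hode : ∀ s : ℝ, deriv x s = Real.cos (θ s) ∧ deriv z s = Real.sin (θ s) ∧
      deriv θ s = κ * z s)
    (hx0 : x 0 = 0) (hθ0 : θ 0 = 0) (hz0 : z 0 = z₀) :
    (∃ s : ℝ, z s = 0) ∧
    (∀ s : ℝ, z₀ ≤ z s ∧ z s ≤ -z₀) ∧
    (∃ s₁ : ℝ, z s₁ = z₀) ∧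
    (∃ s₂ : ℝ, z s₂ = -z₀) ∧
    (∃ T : ℝ, 0 < T ∧
      ∀ s : ℝ,
        x (s + T) = x s + x T ∧
        z (s + T) = z s ∧
        θ (s + T) = θ s) := by
  have hsol : IsHeightAngleSolution κ z θ := fun s =>
    ⟨(hode s).2.1 ▸ (hz s).hasDerivAt, (hode s).2.2 ▸ (hθ s).hasDerivAt⟩
  have henergy (s : ℝ) : cos (θ s) + κ * z s ^ 2 / 2 = 1 + κ * z₀ ^ 2 / 2 := by
    rw [hsol.energy_eq s 0, hθ0, hz0, cos_zero]
  have hbound (s : ℝ) : z₀ ≤ z s ∧ z s ≤ -z₀ := by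
    have hsq : z s ^ 2 ≤ (-z₀) ^ 2 := by nlinarith [henergy s, cos_le_one (θ s)]
    simpa using abs_le_of_sq_le_sq' hsq (by linarith)
  obtain ⟨S, hS, hzS⟩ := hsol.exists_pos_height_nonneg hκ hθ0
    (neg_one_lt_one_add_mul_sq_div_two hκ hz₀l hz₀u)
    fun s => by nlinarith [henergy s, sq_nonneg (z s)]
  obtain ⟨s₀, ⟨hs₀, -⟩, hzs₀⟩ := intermediate_value_Ioc hS.le hz.continuous.continuousOn
    (show (0 : ℝ) ∈ Ioc (z 0) (z S) from ⟨hz0 ▸ hz₀u, hzS⟩)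
  obtain ⟨hzanti, hθanti⟩ := hsol.antiperiodic hθ0 hzs₀
  rw [sub_zero] at hzanti hθanti
  have hxper := sub_eq_sub_of_hasDerivAt_of_periodic
    (fun s => (hode s).1 ▸ (hx s).hasDerivAt) (hθanti.periodic_two_mul.comp cos)
  refine ⟨⟨s₀, hzs₀⟩, hbound, ⟨0, hz0⟩, ⟨2 * s₀, by simpa [hz0] using hzanti 0⟩,
    ⟨2 * (2 * s₀), by positivity,
      fun s => ⟨?_, hzanti.periodic_two_mul s, hθanti.periodic_two_mul s⟩⟩⟩
  linarith [hxper s]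
end

section
/- Let u be a solution of the capillary equation on [0, a] with u(0) = u₀ > 0, u'(0) = 0, and suppose the contact angle condition sin ψ(a) = cos γ holds for some γ ∈ [0, π/2]. Then the rise height q := u(a) − u(0) is given exactly by q = ((2/κ)(1 − sin γ)) / (u₀ + √(u₀² + (2/κ)(1 − sin γ))), and consequently q < √((2/κ)(1 − sin γ)). -/
/-!
Writing `cos ψ = (1 + u'²)^(-1/2)`, the capillary equation says `(cos ψ)' = -κ u u'`, so
`κ u²/2 + cos ψ` is a first integral. Comparing its values at `0` (where `cos ψ = 1`) and at `a`
(where `cos ψ = sin γ`) gives `u(a)² = u₀² + (2/κ)(1 - sin γ)`, and both claims are algebra once we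
know `u(a) > 0` and `sin γ < 1`. The first integral also gives `u² ≥ u₀² > 0`, so `u` never
vanishes and hence `u ≥ u₀`; then `u'' > 0`, hence `u'(a) > u'(0) = 0` and `sin γ = (1 + u'(a)²)^(-1/2) < 1`.
-/

open Real Set

noncomputable def capillaryEnergy (κ h p : ℝ) : ℝ :=
  κ * h ^ 2 / 2 + (1 + p ^ 2) ^ (-(1 : ℝ) / 2)

theorem capillaryEnergy_zero_slope (κ h : ℝ) : capillaryEnergy κ h 0 = κ * h ^ 2 / 2 + 1 := by
  simp [capillaryEnergy]

theorem capillaryEnergy_le (κ h p : ℝ) : capillaryEnergy κ h p ≤ κ * h ^ 2 / 2 + 1 := by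
  have : (1 + p ^ 2) ^ (-(1 : ℝ) / 2) ≤ 1 :=
    rpow_le_one_of_one_le_of_nonpos (by nlinarith [sq_nonneg p]) (by norm_num)
  unfold capillaryEnergy
  linarith

theorem hasDerivAt_capillaryEnergy {κ r : ℝ} {u v : ℝ → ℝ} (hu : HasDerivAt u (v r) r)
    (hv : HasDerivAt v (κ * u r * (1 + v r ^ 2) ^ ((3 : ℝ) / 2)) r) :
    HasDerivAt (fun x => capillaryEnergy κ (u x) (v x)) 0 r := by
  have hpos : 0 < 1 + v r ^ 2 := by positivity
  have hcos := ((hv.pow 2).const_add 1).rpow_const (p := -(1 : ℝ) / 2) (Or.inl hpos.ne')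
  have hpow : (1 + v r ^ 2) ^ ((3 : ℝ) / 2) * (1 + v r ^ 2) ^ (-(1 : ℝ) / 2 - 1) = 1 := by
    rw [← rpow_add hpos]
    norm_num
  refine (((hu.pow 2).const_mul κ).div_const 2 |>.add hcos).congr_deriv ?_
  push_cast
  linear_combination (-(κ * u r * v r)) * hpow

section FirstIntegral

variable {κ a : ℝ} {u v : ℝ → ℝ}
  (hu : ∀ r ∈ Icc 0 a, HasDerivAt u (v r) r)
  (hv : ∀ r ∈ Icc 0 a, HasDerivAt v (κ * u r * (1 + v r ^ 2) ^ ((3 : ℝ) / 2)) r)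
include hu hv

theorem capillaryEnergy_eq_of_mem_Icc {r : ℝ} (hr : r ∈ Icc 0 a) :
    capillaryEnergy κ (u r) (v r) = capillaryEnergy κ (u 0) (v 0) :=
  constant_of_has_deriv_right_zero
    (fun x hx => (hasDerivAt_capillaryEnergy (hu x hx) (hv x hx)).continuousAt.continuousWithinAt)
    (fun x hx => (hasDerivAt_capillaryEnergy (hu x (Ico_subset_Icc_self hx))
      (hv x (Ico_subset_Icc_self hx))).hasDerivWithinAt) r hr

theorem sq_le_sq_of_mem_Icc (hκ : 0 < κ) (hv0 : v 0 = 0) {r : ℝ} (hr : r ∈ Icc 0 a) :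
    u 0 ^ 2 ≤ u r ^ 2 := by
  have h := capillaryEnergy_eq_of_mem_Icc hu hv hr
  rw [hv0, capillaryEnergy_zero_slope] at h
  have := capillaryEnergy_le κ (u r) (v r)
  nlinarith

theorem le_of_mem_Icc (hκ : 0 < κ) (hv0 : v 0 = 0) (hu0 : 0 < u 0) {r : ℝ} (hr : r ∈ Icc 0 a) :
    u 0 ≤ u r := by
  by_contra! hlt
  have hneg : u r ≤ -u 0 := by nlinarith [sq_le_sq_of_mem_Icc hu hv hκ hv0 hr]
  have hcont : ContinuousOn u (Icc 0 r) := fun x hx =>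
    (hu x ⟨hx.1, hx.2.trans hr.2⟩).continuousAt.continuousWithinAt
  obtain ⟨c, hc, hc0⟩ := intermediate_value_Icc' hr.1 hcont ⟨by linarith, hu0.le⟩
  have := sq_le_sq_of_mem_Icc hu hv hκ hv0 ⟨hc.1, hc.2.trans hr.2⟩
  rw [hc0] at this
  nlinarith

theorem slope_pos (hκ : 0 < κ) (ha : 0 < a) (hv0 : v 0 = 0) (hu0 : 0 < u 0) : 0 < v a := by
  have hmono : StrictMonoOn v (Icc 0 a) := by
    refine strictMonoOn_of_hasDerivWithinAt_pos (convex_Icc 0 a)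
      (fun x hx => (hv x hx).continuousAt.continuousWithinAt)
      (fun x hx => (hv x (interior_subset hx)).hasDerivWithinAt) fun x hx => ?_
    have hux : 0 < u x := hu0.trans_le (le_of_mem_Icc hu hv hκ hv0 hu0 (interior_subset hx))
    have : 0 < (1 + v x ^ 2) ^ ((3 : ℝ) / 2) := by positivity
    positivity
  simpa [hv0] using hmono (left_mem_Icc.2 ha.le) (right_mem_Icc.2 ha.le) ha

end FirstIntegral

theorem sin_eq_of_div_sqrt_eq_cos {γ p : ℝ} (hγ0 : 0 ≤ γ) (hγπ : γ ≤ π)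
    (h : p / √(1 + p ^ 2) = cos γ) : sin γ = (1 + p ^ 2) ^ (-(1 : ℝ) / 2) := by
  have hpos : 0 < 1 + p ^ 2 := by positivity
  have h1 : 1 - p ^ 2 / (1 + p ^ 2) = (1 + p ^ 2)⁻¹ := by
    field_simp
    ring
  rw [sin_eq_sqrt_one_sub_cos_sq hγ0 hγπ, ← h, div_pow, sq_sqrt hpos.le, h1, sqrt_eq_rpow,
    ← rpow_neg_one, ← rpow_mul hpos.le]
  norm_num

theorem sub_eq_div_add_sqrt {x y Q : ℝ} (hx : 0 < x) (hy : 0 ≤ y) (h : y ^ 2 = x ^ 2 + Q) :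
    y - x = Q / (x + √(x ^ 2 + Q)) := by
  rw [← h, sqrt_sq hy, eq_div_iff (by positivity)]
  linear_combination h

theorem sub_lt_sqrt {x y Q : ℝ} (hx : 0 < x) (hQ : 0 < Q) (h : y ^ 2 = x ^ 2 + Q) :
    y - x < √Q := by
  have hs : 0 < √Q := sqrt_pos.2 hQ
  have hlt : y ^ 2 < (x + √Q) ^ 2 := by nlinarith [sq_sqrt hQ.le]
  linarith [abs_lt_of_sq_lt_sq hlt (by positivity), le_abs_self y]

/-- exact formula for the rise height q = u(a) − u(0):
q = (2/κ)(1 − sin γ) / (u₀ + √(u₀² + (2/κ)(1 − sin γ))), and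
q < √((2/κ)(1 − sin γ)). -/
theorem stmt_9 (κ a u₀ γ : ℝ) (hκ : 0 < κ) (ha : 0 < a) (u : ℝ → ℝ)
    (hu : Differentiable ℝ u) (hu' : Differentiable ℝ (deriv u))
    (hode : ∀ r ∈ Set.Icc (0 : ℝ) a,
      deriv (deriv u) r = κ * u r * (1 + (deriv u r) ^ 2) ^ ((3 : ℝ) / 2))
    (hu0 : u 0 = u₀) (hu₀pos : 0 < u₀) (hdu0 : deriv u 0 = 0)
    (hγ0 : 0 ≤ γ) (hγ1 : γ ≤ Real.pi / 2)
    (hangle : deriv u a / Real.sqrt (1 + (deriv u a) ^ 2) = Real.cos γ) :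
    u a - u 0 =
      (2 / κ) * (1 - Real.sin γ) /
        (u₀ + Real.sqrt (u₀ ^ 2 + (2 / κ) * (1 - Real.sin γ))) ∧
    u a - u 0 < Real.sqrt ((2 / κ) * (1 - Real.sin γ)) := by
  have hdu : ∀ r ∈ Icc 0 a, HasDerivAt u (deriv u r) r := fun r _ => (hu r).hasDerivAt
  have hddu : ∀ r ∈ Icc 0 a,
      HasDerivAt (deriv u) (κ * u r * (1 + deriv u r ^ 2) ^ ((3 : ℝ) / 2)) r :=
    fun r hr => hode r hr ▸ (hu' r).hasDerivAt
  subst hu0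
  have haa : a ∈ Icc 0 a := right_mem_Icc.2 ha.le
  have hsin := sin_eq_of_div_sqrt_eq_cos hγ0 (by linarith [pi_pos]) hangle
  have hsin_lt : sin γ < 1 := hsin ▸ rpow_lt_one_of_one_lt_of_neg
    (by nlinarith [slope_pos hdu hddu hκ ha hdu0 hu₀pos]) (by norm_num)
  have hheight : u a ^ 2 = u 0 ^ 2 + 2 / κ * (1 - sin γ) := by
    have h := capillaryEnergy_eq_of_mem_Icc hdu hddu haa
    rw [hdu0, capillaryEnergy_zero_slope, capillaryEnergy, ← hsin] at h
    field_simp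
    linarith
  have hua : 0 ≤ u a := hu₀pos.le.trans (le_of_mem_Icc hdu hddu hκ hdu0 hu₀pos haa)
  exact ⟨sub_eq_div_add_sqrt hu₀pos hua hheight,
    sub_lt_sqrt hu₀pos (mul_pos (by positivity) (by linarith)) hheight⟩
end

section
/- (Comparison with circular arcs) Let u be a solution of the capillary equation on [0, a] with u(0) = u₀ > 0, u'(0) = 0 and contact angle condition sin ψ(a) = cos γ for some γ ∈ [0, π/2). Define the lower circular arc u⁽¹⁾(r) = u₀ + R₁ − √(R₁² − r²) with R₁ = 1/(κ u₀), and u⁽²⁾(r) = u₀ + R₂ − √(R₂² − r²) with R₂ = a/cos γ. Then u⁽¹⁾(r) < u(r) < u⁽²⁾(r) for every r ∈ (0, a]. (Here κ a u₀ < cos γ ≤ 1, so that R₁ > a and both arcs are defined on [0, a].) -/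
/-!
Write `ψ = arctan u'` for the inclination angle. The capillary equation says exactly that
`(sin ψ)' = κ u`. A first-zero argument shows `u > 0` on `[0, a]`, so `sin ψ` increases from
`sin ψ(0) = 0`; hence `u' > 0` and `u` increases. Then `(sin ψ)' = κ u > κ u₀` gives
`sin ψ(r) > κ u₀ r`, and at `r = a` this is `κ a u₀ < cos γ`; since `(sin ψ)' = κ u` increases,
`sin ψ` is strictly convex and lies below its chord, `sin ψ(r) < (cos γ / a) r`.
A circular arc of radius `R` through `(0, u₀)` has `sin ψ = r / R`, and `sin ∘ arctan` is
increasing, so these two bounds compare `u'` with the slopes of the arcs of radii `1 / (κ u₀)` and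
`a / cos γ`; integrating from `0` gives the claim.
-/

open Real Set

theorem ContinuousOn.pos_of_forall_Ico_pos {α : Type*} [LinearOrder α] [TopologicalSpace α]
    [OrderClosedTopology α] [CompactIccSpace α] {φ : α → ℝ} {x y : α}
    (hφ : ContinuousOn φ (Icc x y)) (hstep : ∀ c ∈ Icc x y, (∀ t ∈ Ico x c, 0 < φ t) → 0 < φ c) :
    ∀ t ∈ Icc x y, 0 < φ t := by
  by_contra! ⟨t, ht, hφt⟩
  have hclosed : IsClosed (Icc x y ∩ φ ⁻¹' Iic 0) :=
    hφ.preimage_isClosed_of_isClosed isClosed_Icc isClosed_Iic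
  obtain ⟨c, ⟨hc, hφc⟩, hleast⟩ :=
    (isCompact_Icc.of_isClosed_subset hclosed inter_subset_left).exists_isLeast ⟨t, ht, hφt⟩
  refine (hstep c hc fun s hs => ?_).not_ge hφc
  by_contra! hφs
  exact (hleast ⟨⟨hs.1, hs.2.le.trans hc.2⟩, hφs⟩).not_gt hs.2

theorem sub_lt_sub_of_hasDerivAt_lt {f g f' g' : ℝ → ℝ} {x y : ℝ} (hxy : x < y)
    (hf : ContinuousOn f (Icc x y)) (hg : ContinuousOn g (Icc x y))
    (hf' : ∀ t ∈ Ioo x y, HasDerivAt f (f' t) t) (hg' : ∀ t ∈ Ioo x y, HasDerivAt g (g' t) t)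
    (hlt : ∀ t ∈ Ioo x y, f' t < g' t) : g x - f x < g y - f y := by
  have hmono : StrictMonoOn (fun t => g t - f t) (Icc x y) := by
    refine strictMonoOn_of_hasDerivWithinAt_pos (f' := fun t => g' t - f' t) (convex_Icc x y)
      (hg.sub hf) (fun t ht => ?_) (fun t ht => ?_)
    all_goals rw [interior_Icc] at ht
    · exact ((hg' t ht).sub (hf' t ht)).hasDerivWithinAt
    · exact sub_pos.2 (hlt t ht)
  exact hmono (left_mem_Icc.2 hxy.le) (right_mem_Icc.2 hxy.le) hxy

theorem HasDerivAt.sin_arctan {f : ℝ → ℝ} {f' x : ℝ} (hf : HasDerivAt f f' x) :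
    HasDerivAt (fun t => Real.sin (Real.arctan (f t))) (f' / (1 + f x ^ 2) ^ ((3 : ℝ) / 2)) x := by
  have hq : 0 < 1 + f x ^ 2 := by positivity
  convert hf.arctan.sin using 1
  rw [cos_arctan, show (3 : ℝ) / 2 = 1 + 1 / 2 by norm_num, rpow_add hq, rpow_one,
    ← sqrt_eq_rpow]
  field_simp

/-- The lower half of the circle of radius `R` centred at `(0, c + R)`. -/
noncomputable def circleArc (c R r : ℝ) : ℝ := c + R - √(R ^ 2 - r ^ 2)

theorem continuous_circleArc (c R : ℝ) : Continuous (circleArc c R) := by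
  unfold circleArc
  fun_prop

theorem circleArc_zero (c : ℝ) {R : ℝ} (hR : 0 ≤ R) : circleArc c R 0 = c := by
  simp [circleArc, sqrt_sq hR]

theorem hasDerivAt_circleArc (c R : ℝ) {r : ℝ} (hr : r ^ 2 < R ^ 2) :
    HasDerivAt (circleArc c R) (r / √(R ^ 2 - r ^ 2)) r := by
  have hq : 0 < R ^ 2 - r ^ 2 := sub_pos.2 hr
  have h := (((hasDerivAt_pow 2 r).const_sub (R ^ 2)).sqrt hq.ne').const_sub (c + R)
  refine h.congr_deriv ?_
  field_simp
  ring

theorem sin_arctan_slope_circleArc {r R : ℝ} (hR : 0 < R) (hr : r ^ 2 < R ^ 2) :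
    sin (arctan (r / √(R ^ 2 - r ^ 2))) = r / R := by
  have hq : 0 < R ^ 2 - r ^ 2 := sub_pos.2 hr
  have hw : 0 < √(R ^ 2 - r ^ 2) := sqrt_pos.2 hq
  have h1 : 1 + (r / √(R ^ 2 - r ^ 2)) ^ 2 = (R / √(R ^ 2 - r ^ 2)) ^ 2 := by
    field_simp
    rw [sq_sqrt hq.le]
    ring
  rw [sin_arctan, h1, sqrt_sq (by positivity)]
  field_simp

/-- The inclination angle `ψ` of the graph of `u`; `sin ψ = u' / √(1 + u'²)` by `sin_arctan`. -/
noncomputable def inclination (u : ℝ → ℝ) (r : ℝ) : ℝ := arctan (deriv u r)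

theorem circleArc_lt_of_lt_sin_inclination {u : ℝ → ℝ} {a R r : ℝ} (hu : Differentiable ℝ u)
    (haR : a ≤ R) (h : ∀ t ∈ Ioo 0 a, t / R < sin (inclination u t)) (hr : r ∈ Ioc 0 a) :
    circleArc (u 0) R r < u r := by
  have hR : 0 < R := hr.1.trans_le (hr.2.trans haR)
  have hsq : ∀ t ∈ Ioo 0 r, t ^ 2 < R ^ 2 := fun t ht =>
    pow_lt_pow_left₀ (ht.2.trans_le (hr.2.trans haR)) ht.1.le two_ne_zero
  have := sub_lt_sub_of_hasDerivAt_lt hr.1 (continuous_circleArc (u 0) R).continuousOn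
    hu.continuous.continuousOn (fun t ht => hasDerivAt_circleArc (u 0) R (hsq t ht))
    (fun t ht => (hu t).hasDerivAt) fun t ht => by
      rw [← sin_arctan_strictMono.lt_iff_lt, sin_arctan_slope_circleArc hR (hsq t ht)]
      exact h t ⟨ht.1, ht.2.trans_le hr.2⟩
  rwa [circleArc_zero _ hR.le, sub_self, sub_pos] at this

theorem lt_circleArc_of_sin_inclination_lt {u : ℝ → ℝ} {a R r : ℝ} (hu : Differentiable ℝ u)
    (haR : a ≤ R) (h : ∀ t ∈ Ioo 0 a, sin (inclination u t) < t / R) (hr : r ∈ Ioc 0 a) :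
    u r < circleArc (u 0) R r := by
  have hR : 0 < R := hr.1.trans_le (hr.2.trans haR)
  have hsq : ∀ t ∈ Ioo 0 r, t ^ 2 < R ^ 2 := fun t ht =>
    pow_lt_pow_left₀ (ht.2.trans_le (hr.2.trans haR)) ht.1.le two_ne_zero
  have := sub_lt_sub_of_hasDerivAt_lt hr.1 hu.continuous.continuousOn
    (continuous_circleArc (u 0) R).continuousOn (fun t ht => (hu t).hasDerivAt)
    (fun t ht => hasDerivAt_circleArc (u 0) R (hsq t ht)) fun t ht => by
      rw [← sin_arctan_strictMono.lt_iff_lt, sin_arctan_slope_circleArc hR (hsq t ht)]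
      exact h t ⟨ht.1, ht.2.trans_le hr.2⟩
  rwa [circleArc_zero _ hR.le, sub_self, sub_pos] at this

structure IsCapillarySolution (κ a : ℝ) (u : ℝ → ℝ) : Prop where
  differentiable : Differentiable ℝ u
  differentiable_deriv : Differentiable ℝ (deriv u)
  ode : ∀ r ∈ Icc 0 a, deriv (deriv u) r = κ * u r * (1 + deriv u r ^ 2) ^ ((3 : ℝ) / 2)
  deriv_zero : deriv u 0 = 0

namespace IsCapillarySolution

variable {κ a : ℝ} {u : ℝ → ℝ}

theorem hasDerivAt_sin_inclination (hu : IsCapillarySolution κ a u) {r : ℝ} (hr : r ∈ Icc 0 a) :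
    HasDerivAt (fun t => sin (inclination u t)) (κ * u r) r := by
  have h := (hu.differentiable_deriv r).hasDerivAt.sin_arctan
  rwa [hu.ode r hr, mul_div_assoc, div_self (by positivity), mul_one] at h

theorem continuous_sin_inclination (hu : IsCapillarySolution κ a u) :
    Continuous (fun t => sin (inclination u t)) := by
  have := hu.differentiable_deriv.continuous
  unfold inclination
  fun_prop

theorem sin_inclination_zero (hu : IsCapillarySolution κ a u) : sin (inclination u 0) = 0 := by
  simp [inclination, hu.deriv_zero]

theorem pos (hu : IsCapillarySolution κ a u) (hκ : 0 ≤ κ) (hu0 : 0 < u 0) :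
    ∀ r ∈ Icc 0 a, 0 < u r := by
  refine hu.differentiable.continuous.continuousOn.pos_of_forall_Ico_pos fun c hc hpos => ?_
  have hs : MonotoneOn (fun t => sin (inclination u t)) (Icc 0 c) := by
    refine monotoneOn_of_hasDerivWithinAt_nonneg (f' := fun t => κ * u t) (convex_Icc 0 c)
      hu.continuous_sin_inclination.continuousOn (fun t ht => ?_) (fun t ht => ?_)
    all_goals rw [interior_Icc] at ht
    · exact (hu.hasDerivAt_sin_inclination ⟨ht.1.le, ht.2.le.trans hc.2⟩).hasDerivWithinAt
    · exact mul_nonneg hκ (hpos t ⟨ht.1.le, ht.2⟩).le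
  have hderiv_nonneg : ∀ t ∈ interior (Icc 0 c), 0 ≤ deriv u t := fun t ht => by
    have : sin (inclination u 0) ≤ sin (inclination u t) :=
      hs (left_mem_Icc.2 hc.1) (interior_subset ht) (interior_subset ht).1
    rwa [hu.sin_inclination_zero, inclination, sin_arctan_nonneg] at this
  have hmono : MonotoneOn u (Icc 0 c) := monotoneOn_of_deriv_nonneg (convex_Icc 0 c)
    hu.differentiable.continuous.continuousOn hu.differentiable.differentiableOn hderiv_nonneg
  exact hu0.trans_le (hmono (left_mem_Icc.2 hc.1) (right_mem_Icc.2 hc.1) hc.1)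

theorem strictMonoOn_sin_inclination (hu : IsCapillarySolution κ a u) (hκ : 0 < κ)
    (hu0 : 0 < u 0) : StrictMonoOn (fun t => sin (inclination u t)) (Icc 0 a) :=
  strictMonoOn_of_hasDerivWithinAt_pos (convex_Icc 0 a) hu.continuous_sin_inclination.continuousOn
    (fun _ ht => (hu.hasDerivAt_sin_inclination (interior_subset ht)).hasDerivWithinAt)
    fun t ht => mul_pos hκ (hu.pos hκ.le hu0 t (interior_subset ht))

theorem strictMonoOn (hu : IsCapillarySolution κ a u) (hκ : 0 < κ) (hu0 : 0 < u 0) :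
    StrictMonoOn u (Icc 0 a) := by
  refine strictMonoOn_of_deriv_pos (convex_Icc 0 a) hu.differentiable.continuous.continuousOn
    fun t ht => ?_
  rw [interior_Icc] at ht
  have : sin (inclination u 0) < sin (inclination u t) := hu.strictMonoOn_sin_inclination hκ hu0
    (left_mem_Icc.2 (ht.1.trans ht.2).le) ⟨ht.1.le, ht.2.le⟩ ht.1
  rwa [hu.sin_inclination_zero, inclination, sin_arctan_pos] at this

theorem mul_lt_sin_inclination (hu : IsCapillarySolution κ a u) (hκ : 0 < κ) (hu0 : 0 < u 0)
    {r : ℝ} (hr : r ∈ Ioc 0 a) : κ * u 0 * r < sin (inclination u r) := by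
  have := sub_lt_sub_of_hasDerivAt_lt (f' := fun _ => κ * u 0) hr.1
    (continuous_const_mul (κ * u 0)).continuousOn hu.continuous_sin_inclination.continuousOn
    (fun t _ => by simpa using (hasDerivAt_id t).const_mul (κ * u 0))
    (fun t ht => hu.hasDerivAt_sin_inclination ⟨ht.1.le, ht.2.le.trans hr.2⟩)
    fun t ht => mul_lt_mul_of_pos_left (hu.strictMonoOn hκ hu0
      (left_mem_Icc.2 (hr.1.le.trans hr.2)) ⟨ht.1.le, ht.2.le.trans hr.2⟩ ht.1) hκ
  simpa [hu.sin_inclination_zero] using this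

theorem sin_inclination_lt (hu : IsCapillarySolution κ a u) (hκ : 0 < κ) (hu0 : 0 < u 0)
    {r : ℝ} (hr : r ∈ Ioo 0 a) : sin (inclination u r) < sin (inclination u a) / a * r := by
  have ha : 0 < a := hr.1.trans hr.2
  have hderiv : EqOn (deriv fun t => sin (inclination u t)) (fun t => κ * u t)
      (interior (Icc 0 a)) := fun t ht => (hu.hasDerivAt_sin_inclination (interior_subset ht)).deriv
  have hconv : StrictConvexOn ℝ (Icc 0 a) (fun t => sin (inclination u t)) :=
    StrictMonoOn.strictConvexOn_of_deriv (convex_Icc 0 a) hu.continuous_sin_inclination.continuousOn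
      (StrictMonoOn.congr (fun x hx y hy hxy => mul_lt_mul_of_pos_left
        (hu.strictMonoOn hκ hu0 (interior_subset hx) (interior_subset hy) hxy) hκ) hderiv.symm)
  have := hconv.secant_strict_mono (left_mem_Icc.2 ha.le) ⟨hr.1.le, hr.2.le⟩
    (right_mem_Icc.2 ha.le) hr.1.ne' ha.ne' hr.2
  simp only [hu.sin_inclination_zero, sub_zero] at this
  rwa [div_lt_iff₀ hr.1, div_mul_eq_mul_div, mul_div_right_comm] at this

end IsCapillarySolution

theorem stmt_11_general (κ a u₀ γ : ℝ) (hκ : 0 < κ) (ha : 0 < a) (u : ℝ → ℝ)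
    (hu : Differentiable ℝ u) (hu' : Differentiable ℝ (deriv u))
    (hode : ∀ r ∈ Set.Icc (0 : ℝ) a,
      deriv (deriv u) r = κ * u r * (1 + (deriv u r) ^ 2) ^ ((3 : ℝ) / 2))
    (hu0 : u 0 = u₀) (hu₀pos : 0 < u₀) (hdu0 : deriv u 0 = 0)
    (hangle : deriv u a / Real.sqrt (1 + (deriv u a) ^ 2) = Real.cos γ) :
    κ * a * u₀ < Real.cos γ ∧ Real.cos γ ≤ 1 ∧
    ∀ r ∈ Set.Ioc (0 : ℝ) a,
      u₀ + 1 / (κ * u₀) - Real.sqrt ((1 / (κ * u₀)) ^ 2 - r ^ 2) < u r ∧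
      u r < u₀ + a / Real.cos γ - Real.sqrt ((a / Real.cos γ) ^ 2 - r ^ 2) := by
  subst hu0
  have hsol : IsCapillarySolution κ a u := ⟨hu, hu', hode, hdu0⟩
  have hsin_a : sin (inclination u a) = cos γ := by rwa [inclination, sin_arctan]
  have hlower : ∀ r ∈ Ioc 0 a, κ * u 0 * r < sin (inclination u r) := fun _ hr =>
    hsol.mul_lt_sin_inclination hκ hu₀pos hr
  have hcos : κ * a * u 0 < cos γ := by
    simpa [hsin_a, mul_right_comm] using hlower a (right_mem_Ioc.2 ha)
  have hcos_pos : 0 < cos γ := lt_trans (by positivity) hcos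
  have haR₁ : a ≤ 1 / (κ * u 0) := by
    rw [le_div_iff₀ (by positivity)]
    nlinarith [cos_le_one γ]
  refine ⟨hcos, cos_le_one γ, fun r hr => ⟨?_, ?_⟩⟩
  · refine circleArc_lt_of_lt_sin_inclination hu haR₁ (fun t ht => ?_) hr
    rw [div_div_eq_mul_div, div_one, mul_comm]
    exact hlower t ⟨ht.1, ht.2.le⟩
  · refine lt_circleArc_of_sin_inclination_lt hu (le_div_self ha.le hcos_pos (cos_le_one γ))
      (fun t ht => ?_) hr
    rw [div_div_eq_mul_div, mul_comm t, mul_div_right_comm, ← hsin_a]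
    exact hsol.sin_inclination_lt hκ hu₀pos ht

/-- Comparison with circular arcs: with R₁ = 1/(κu₀) and
R₂ = a/cos γ, the circular arcs u⁽¹⁾(r) = u₀ + R₁ − √(R₁² − r²) and
u⁽²⁾(r) = u₀ + R₂ − √(R₂² − r²) satisfy u⁽¹⁾(r) < u(r) < u⁽²⁾(r) on (0, a];
moreover κ a u₀ < cos γ ≤ 1 (so that both arcs are defined on [0, a]). -/
theorem stmt_11 (κ a u₀ γ : ℝ) (hκ : 0 < κ) (ha : 0 < a) (u : ℝ → ℝ)
    (hu : Differentiable ℝ u) (hu' : Differentiable ℝ (deriv u))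
    (hode : ∀ r ∈ Set.Icc (0 : ℝ) a,
      deriv (deriv u) r = κ * u r * (1 + (deriv u r) ^ 2) ^ ((3 : ℝ) / 2))
    (hu0 : u 0 = u₀) (hu₀pos : 0 < u₀) (hdu0 : deriv u 0 = 0)
    (hγ0 : 0 ≤ γ) (hγ1 : γ < Real.pi / 2)
    (hangle : deriv u a / Real.sqrt (1 + (deriv u a) ^ 2) = Real.cos γ) :
    κ * a * u₀ < Real.cos γ ∧ Real.cos γ ≤ 1 ∧
    ∀ r ∈ Set.Ioc (0 : ℝ) a,
      u₀ + 1 / (κ * u₀) - Real.sqrt ((1 / (κ * u₀)) ^ 2 - r ^ 2) < u r ∧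
      u r < u₀ + a / Real.cos γ - Real.sqrt ((a / Real.cos γ) ^ 2 - r ^ 2) :=
  stmt_11_general κ a u₀ γ hκ ha u hu hu' hode hu0 hu₀pos hdu0 hangle
end

section
/- (Estimate of the outer height) Let u be a solution of the capillary equation on [0, a] with u(0) = u₀ > 0, u'(0) = 0 and contact angle condition sin ψ(a) = cos γ for some γ ∈ [0, π/2). Then u(a) < cos γ/(κ a) − (a/2) tan γ + (a/(2 cos² γ))(π/2 − γ). -/
/-!
Along the meniscus `(sin ψ)' = κ u`, so `κ ∫₀ᵃ u = sin ψ(a) = cos γ`. Since `u` increases,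
`sin ψ` is strictly convex and stays below its chord `k r`, `k = cos γ / a`; hence `u` is less
steep than the circular arc `r ↦ -√(1 - (k r)²) / k`, whose inclination has sine `k r`. So
`arc - u` increases and its integral over `[0, a]` is less than `a` times its value at `a`; the
integral of the arc is explicit (substitute `x = sin t`), and this gives the bound.
-/

open Real Set intervalIntegral

/-- `sin ψ` for a graph of slope `tan ψ = x`. -/
noncomputable def sinOfSlope (x : ℝ) : ℝ := x / √(1 + x ^ 2)

@[simp]
theorem sinOfSlope_zero : sinOfSlope 0 = 0 := by
  simp [sinOfSlope]

theorem hasDerivAt_sinOfSlope (x : ℝ) :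
    HasDerivAt sinOfSlope ((1 + x ^ 2) ^ ((3 : ℝ) / 2))⁻¹ x := by
  have hpos : 0 < 1 + x ^ 2 := by positivity
  have hsqrt : HasDerivAt (fun x => √(1 + x ^ 2)) (x / √(1 + x ^ 2)) x := by
    convert ((hasDerivAt_pow 2 x).const_add 1).sqrt hpos.ne' using 1
    field_simp
    ring
  have h32 : (1 + x ^ 2) ^ ((3 : ℝ) / 2) = (1 + x ^ 2) * √(1 + x ^ 2) := by
    rw [sqrt_eq_rpow, ← rpow_one_add' hpos.le (by norm_num)]
    norm_num
  refine ((hasDerivAt_id x).div hsqrt (sqrt_pos.2 hpos).ne').congr_deriv ?_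
  have hsq := sq_sqrt hpos.le
  rw [h32]
  field_simp
  simp only [id]
  linear_combination x ^ 2 * hsq

theorem sinOfSlope_strictMono : StrictMono sinOfSlope :=
  strictMono_of_deriv_pos fun x => by
    rw [(hasDerivAt_sinOfSlope x).deriv]
    positivity

theorem sinOfSlope_lt_one (x : ℝ) : sinOfSlope x < 1 := by
  have hpos : 0 < 1 + x ^ 2 := by positivity
  rw [sinOfSlope, div_lt_one (sqrt_pos.2 hpos)]
  exact lt_sqrt_of_sq_lt (by linarith)

theorem sinOfSlope_div_sqrt_one_sub_sq {t : ℝ} (ht : t ^ 2 < 1) :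
    sinOfSlope (t / √(1 - t ^ 2)) = t := by
  have hpos : 0 < 1 - t ^ 2 := by linarith
  have hs := sqrt_pos.2 hpos
  have h : 1 + (t / √(1 - t ^ 2)) ^ 2 = (1 / √(1 - t ^ 2)) ^ 2 := by
    rw [div_pow, div_pow, sq_sqrt hpos.le]
    field_simp
    ring
  rw [sinOfSlope, h, sqrt_sq (by positivity)]
  field_simp

noncomputable def lowerArc (k r : ℝ) : ℝ := -√(1 - (k * r) ^ 2) / k

theorem hasDerivAt_lowerArc {k r : ℝ} (hk : k ≠ 0) (hr : (k * r) ^ 2 < 1) :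
    HasDerivAt (lowerArc k) (k * r / √(1 - (k * r) ^ 2)) r := by
  have hpos : 0 < 1 - (k * r) ^ 2 := by linarith
  have hkr : HasDerivAt (fun r => 1 - (k * r) ^ 2) (-(2 * (k * r) * k)) r := by
    have h := ((hasDerivAt_pow 2 (k * r)).comp r ((hasDerivAt_id r).const_mul k)).const_sub 1
    refine h.congr_deriv ?_
    simp
  refine (hkr.sqrt hpos.ne').neg.div_const k |>.congr_deriv ?_
  field_simp

theorem integral_sqrt_one_sub_sq_zero_sin {θ : ℝ} (hθ : θ ∈ Icc (-(π / 2)) (π / 2)) :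
    ∫ x in (0 : ℝ)..sin θ, √(1 - x ^ 2) = (θ + sin θ * cos θ) / 2 := by
  have h0 : (0 : ℝ) ∈ Icc (-(π / 2)) (π / 2) := ⟨by linarith [pi_pos], by linarith [pi_pos]⟩
  calc ∫ x in (0 : ℝ)..sin θ, √(1 - x ^ 2)
      = ∫ x in sin 0..sin θ, √(1 - x ^ 2) := by rw [sin_zero]
    _ = ∫ t in (0 : ℝ)..θ, √(1 - sin t ^ 2) * cos t :=
        (integral_comp_mul_deriv (fun x _ => hasDerivAt_sin x) continuousOn_cos
          (by fun_prop)).symm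
    _ = ∫ t in (0 : ℝ)..θ, cos t ^ 2 := by
        refine integral_congr fun t ht => ?_
        obtain ⟨hl, hu⟩ := uIcc_subset_Icc h0 hθ ht
        rw [← cos_eq_sqrt_one_sub_sin_sq hl hu, sq]
    _ = (θ + sin θ * cos θ) / 2 := by
        rw [integral_cos_sq]
        simp only [cos_zero, sin_zero]
        ring

theorem integral_lowerArc {k a θ : ℝ} (hk : k ≠ 0) (hka : k * a = sin θ)
    (hθ : θ ∈ Icc (-(π / 2)) (π / 2)) :
    ∫ r in (0 : ℝ)..a, lowerArc k r = -(θ + sin θ * cos θ) / (2 * k ^ 2) := by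
  simp only [lowerArc, intervalIntegral.integral_div, intervalIntegral.integral_neg,
    integral_comp_mul_left (fun x => √(1 - x ^ 2)) hk, mul_zero, hka,
    integral_sqrt_one_sub_sq_zero_sin hθ, smul_eq_mul]
  field_simp

theorem lowerArc_of_mul_eq_sin {k a θ : ℝ} (hka : k * a = sin θ)
    (hθ : θ ∈ Icc (-(π / 2)) (π / 2)) : lowerArc k a = -cos θ / k := by
  rw [lowerArc, hka, ← cos_eq_sqrt_one_sub_sin_sq hθ.1 hθ.2]

section IntervalMonotonicity

variable {f : ℝ → ℝ} {a b : ℝ}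

theorem StrictMonoOn.integral_lt_mul (hab : a < b) (hc : ContinuousOn f (Icc a b))
    (hf : StrictMonoOn f (Icc a b)) : ∫ x in a..b, f x < (b - a) * f b := by
  have ha := left_mem_Icc.2 hab.le
  have hb := right_mem_Icc.2 hab.le
  have h := integral_lt_integral_of_continuousOn_of_le_of_exists_lt hab hc continuousOn_const
    (fun x hx => hf.monotoneOn (Ioc_subset_Icc_self hx) hb hx.2) ⟨a, ha, hf ha hb hab⟩
  simpa using h

theorem strictMonoOn_Icc_of_deriv_pos_Ioc (hf : Differentiable ℝ f)
    (h : ∀ r ∈ Ioc a b, 0 < deriv f r) : StrictMonoOn f (Icc a b) :=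
  strictMonoOn_of_deriv_pos (convex_Icc a b) hf.continuous.continuousOn fun x hx =>
    h x (Ioo_subset_Ioc_self (interior_Icc (a := a) (b := b) ▸ hx))

theorem deriv_pos_of_deriv_deriv_pos (hf' : Differentiable ℝ (deriv f)) (ha : deriv f a = 0)
    (h : ∀ r ∈ Ioo a b, 0 < deriv (deriv f) r) : ∀ r ∈ Ioc a b, 0 < deriv f r := by
  intro r hr
  have hmono : StrictMonoOn (deriv f) (Icc a b) :=
    strictMonoOn_of_deriv_pos (convex_Icc a b) hf'.continuous.continuousOn
      fun x hx => h x (interior_Icc (a := a) (b := b) ▸ hx)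
  simpa [ha] using hmono (left_mem_Icc.2 (hr.1.le.trans hr.2)) (Ioc_subset_Icc_self hr) hr.1

theorem deriv_pos_of_deriv_deriv_pos_of_pos (hf : Differentiable ℝ f)
    (hf' : Differentiable ℝ (deriv f)) (hfa : 0 < f a) (ha : deriv f a = 0)
    (h : ∀ r ∈ Icc a b, 0 < f r → 0 < deriv (deriv f) r) : ∀ r ∈ Ioc a b, 0 < deriv f r := by
  suffices hpos : ∀ r ∈ Icc a b, 0 < f r from
    deriv_pos_of_deriv_deriv_pos hf' ha fun r hr =>
      h r (Ioo_subset_Icc_self hr) (hpos r (Ioo_subset_Icc_self hr))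
  by_contra! hneg
  set Z := Icc a b ∩ f ⁻¹' Iic 0
  have hZ : IsClosed Z := isClosed_Icc.inter (isClosed_Iic.preimage hf.continuous)
  have hbdd : BddBelow Z := ⟨a, fun r hr => hr.1.1⟩
  obtain ⟨⟨har₁, hr₁b⟩, hfr₁⟩ := hZ.csInf_mem hneg hbdd
  -- `r₁` is the first zero of `f` in `[a, b]`
  set r₁ := sInf Z
  have har₁' : a < r₁ := lt_of_le_of_ne har₁ fun he => (he ▸ hfa).not_ge hfr₁
  have hpos : ∀ r ∈ Ico a r₁, 0 < f r := fun r hr => not_le.1 fun hle =>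
    (csInf_le hbdd ⟨⟨hr.1, hr.2.le.trans hr₁b⟩, hle⟩).not_gt hr.2
  have hmono := strictMonoOn_Icc_of_deriv_pos_Ioc hf <| deriv_pos_of_deriv_deriv_pos hf' ha
    fun r hr => h r ⟨hr.1.le, hr.2.le.trans hr₁b⟩ (hpos r (Ioo_subset_Ico_self hr))
  exact (hfa.trans (hmono (left_mem_Icc.2 har₁) (right_mem_Icc.2 har₁) har₁')).not_ge hfr₁

end IntervalMonotonicity

section Capillary

variable {κ a : ℝ} {u : ℝ → ℝ}

theorem hasDerivAt_sinOfSlope_deriv (hu' : Differentiable ℝ (deriv u)) {r : ℝ}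
    (hode : deriv (deriv u) r = κ * u r * (1 + deriv u r ^ 2) ^ ((3 : ℝ) / 2)) :
    HasDerivAt (fun r => sinOfSlope (deriv u r)) (κ * u r) r := by
  refine ((hasDerivAt_sinOfSlope (deriv u r)).comp r (hu' r).hasDerivAt).congr_deriv ?_
  have : 0 < (1 + deriv u r ^ 2) ^ ((3 : ℝ) / 2) := by positivity
  rw [hode]
  field_simp

theorem mul_integral_eq_sinOfSlope_sub (ha : 0 ≤ a) (hu : Continuous u)
    (hu' : Differentiable ℝ (deriv u))
    (hode : ∀ r ∈ Icc 0 a, deriv (deriv u) r = κ * u r * (1 + deriv u r ^ 2) ^ ((3 : ℝ) / 2)) :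
    κ * ∫ r in (0 : ℝ)..a, u r = sinOfSlope (deriv u a) - sinOfSlope (deriv u 0) := by
  rw [← intervalIntegral.integral_const_mul]
  refine integral_eq_sub_of_hasDerivAt (fun r hr => hasDerivAt_sinOfSlope_deriv hu' ?_) ?_
  · exact hode r (uIcc_of_le ha ▸ hr)
  · exact (continuous_const.mul hu).intervalIntegrable 0 a

theorem sinOfSlope_deriv_lt_secant (hκ : 0 < κ) (ha : 0 < a) (hu' : Differentiable ℝ (deriv u))
    (hode : ∀ r ∈ Icc 0 a, deriv (deriv u) r = κ * u r * (1 + deriv u r ^ 2) ^ ((3 : ℝ) / 2))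
    (hmono : StrictMonoOn u (Icc 0 a)) (hdu0 : deriv u 0 = 0) :
    ∀ s ∈ Ioo 0 a, sinOfSlope (deriv u s) < sinOfSlope (deriv u a) / a * s := by
  have hF r (hr : r ∈ Icc 0 a) := hasDerivAt_sinOfSlope_deriv hu' (hode r hr)
  have hconv : StrictConvexOn ℝ (Icc 0 a) fun r => sinOfSlope (deriv u r) := by
    refine StrictMonoOn.strictConvexOn_of_deriv (convex_Icc 0 a)
      (fun r hr => (hF r hr).continuousAt.continuousWithinAt) ?_
    rw [interior_Icc]
    intro x hx y hy hxy
    rw [(hF x (Ioo_subset_Icc_self hx)).deriv, (hF y (Ioo_subset_Icc_self hy)).deriv]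
    exact mul_lt_mul_of_pos_left
      (hmono (Ioo_subset_Icc_self hx) (Ioo_subset_Icc_self hy) hxy) hκ
  intro s hs
  have h := hconv.secant_strict_mono (left_mem_Icc.2 ha.le) (Ioo_subset_Icc_self hs)
    (right_mem_Icc.2 ha.le) hs.1.ne' ha.ne' hs.2
  simp only [hdu0, sinOfSlope_zero, sub_zero] at h
  rwa [div_lt_iff₀ hs.1] at h

theorem capillary_mul_height_lt (hκ : 0 < κ) (ha : 0 < a) (hu : Differentiable ℝ u)
    (hu' : Differentiable ℝ (deriv u))
    (hode : ∀ r ∈ Icc 0 a, deriv (deriv u) r = κ * u r * (1 + deriv u r ^ 2) ^ ((3 : ℝ) / 2))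
    (hu0 : 0 < u 0) (hdu0 : deriv u 0 = 0) :
    a * u a < a * lowerArc (sinOfSlope (deriv u a) / a) a
      - (∫ r in (0 : ℝ)..a, lowerArc (sinOfSlope (deriv u a) / a) r)
      + sinOfSlope (deriv u a) / κ := by
  have hv := deriv_pos_of_deriv_deriv_pos_of_pos hu hu' hu0 hdu0 fun r hr hur => by
    rw [hode r hr]
    positivity
  have hmono := strictMonoOn_Icc_of_deriv_pos_Ioc hu hv
  set c := sinOfSlope (deriv u a)
  set k := c / a
  have hc0 : 0 < c := by simpa using sinOfSlope_strictMono (hv a ⟨ha, le_rfl⟩)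
  have hk : 0 < k := div_pos hc0 ha
  have hkr : ∀ r ∈ Icc 0 a, (k * r) ^ 2 < 1 := fun r hr => by
    have hkrc : k * r ≤ c := by
      calc k * r ≤ k * a := mul_le_mul_of_nonneg_left hr.2 hk.le
        _ = c := div_mul_cancel₀ c ha.ne'
    nlinarith [mul_nonneg hk.le hr.1, sinOfSlope_lt_one (deriv u a)]
  -- the arc is steeper than `u` because its `sin ψ`, namely `k r`, is larger
  have hslope : ∀ s ∈ Ioo 0 a, deriv u s < k * s / √(1 - (k * s) ^ 2) := fun s hs => by
    rw [← sinOfSlope_strictMono.lt_iff_lt,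
      sinOfSlope_div_sqrt_one_sub_sq (hkr s (Ioo_subset_Icc_self hs))]
    exact sinOfSlope_deriv_lt_secant hκ ha hu' hode hmono hdu0 s hs
  have hgap r (hr : r ∈ Icc 0 a) :=
    (hasDerivAt_lowerArc hk.ne' (hkr r hr)).sub (hu r).hasDerivAt
  have hgap_mono : StrictMonoOn (lowerArc k - u) (Icc 0 a) :=
    strictMonoOn_of_deriv_pos (convex_Icc 0 a)
      (fun r hr => (hgap r hr).continuousAt.continuousWithinAt) fun r hr => by
        rw [interior_Icc] at hr
        rw [(hgap r (Ioo_subset_Icc_self hr)).deriv]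
        exact sub_pos.2 (hslope r hr)
  have hint := hgap_mono.integral_lt_mul ha
    fun r hr => (hgap r hr).continuousAt.continuousWithinAt
  have harc_int : IntervalIntegrable (lowerArc k) MeasureTheory.volume 0 a :=
    ContinuousOn.intervalIntegrable fun r hr =>
      (hasDerivAt_lowerArc hk.ne' (hkr r (uIcc_of_le ha.le ▸ hr))).continuousAt.continuousWithinAt
  simp only [Pi.sub_apply] at hint
  rw [intervalIntegral.integral_sub harc_int (hu.continuous.intervalIntegrable 0 a)] at hint
  have hu_int := mul_integral_eq_sinOfSlope_sub ha.le hu.continuous hu' hode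
  rw [hdu0, sinOfSlope_zero, sub_zero, mul_comm, ← eq_div_iff hκ.ne'] at hu_int
  rw [hu_int] at hint
  linarith

end Capillary

/-- Estimate of the outer height:
u(a) < cos γ/(κa) − (a/2) tan γ + (a/(2cos²γ))(π/2 − γ). -/
theorem stmt_14 (κ a u₀ γ : ℝ) (hκ : 0 < κ) (ha : 0 < a) (u : ℝ → ℝ)
    (hu : Differentiable ℝ u) (hu' : Differentiable ℝ (deriv u))
    (hode : ∀ r ∈ Set.Icc (0 : ℝ) a,
      deriv (deriv u) r = κ * u r * (1 + (deriv u r) ^ 2) ^ ((3 : ℝ) / 2))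
    (hu0 : u 0 = u₀) (hu₀pos : 0 < u₀) (hdu0 : deriv u 0 = 0)
    (hγ0 : 0 ≤ γ) (hγ1 : γ < Real.pi / 2)
    (hangle : deriv u a / Real.sqrt (1 + (deriv u a) ^ 2) = Real.cos γ) :
    u a < Real.cos γ / (κ * a) - (a / 2) * Real.tan γ +
      (a / (2 * (Real.cos γ) ^ 2)) * (Real.pi / 2 - γ) := by
  have hcos : 0 < cos γ := cos_pos_of_mem_Ioo ⟨by linarith, hγ1⟩
  have hθ : π / 2 - γ ∈ Icc (-(π / 2)) (π / 2) := ⟨by linarith [pi_pos], by linarith⟩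
  have hka : cos γ / a * a = sin (π / 2 - γ) := by
    rw [div_mul_cancel₀ _ ha.ne', sin_pi_div_two_sub]
  have key := capillary_mul_height_lt hκ ha hu hu' hode (hu0 ▸ hu₀pos) hdu0
  rw [show sinOfSlope (deriv u a) = cos γ from hangle, integral_lowerArc (by positivity) hka hθ,
    lowerArc_of_mul_eq_sin hka hθ, sin_pi_div_two_sub, cos_pi_div_two_sub] at key
  rw [← mul_lt_mul_iff_right₀ ha, tan_eq_sin_div_cos]
  have h : a * (cos γ / (κ * a) - a / 2 * (sin γ / cos γ) + a / (2 * cos γ ^ 2) * (π / 2 - γ)) =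
      a * (-sin γ / (cos γ / a)) - -(π / 2 - γ + cos γ * sin γ) / (2 * (cos γ / a) ^ 2)
        + cos γ / κ := by
    field_simp
    ring
  rwa [h]
end

section
/- (Graph criterion for pendent channels) Let κ < 0 and let (x, z, θ) be the solution of the system (P) on ℝ with x(0) = 0, θ(0) = 0 and z(0) = z₀ < 0. Then the directrix α = (x, z) has no vertical points, i.e. cos θ(s) > 0 for all s ∈ ℝ (so that the κ-cylindrical surface is a graph over the plane), if and only if −√(2/(−κ)) < z₀. Moreover, in this case z₀ ≤ z(s) ≤ −z₀ for all s ∈ ℝ. -/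
/-!
Along a solution, `cos θ + κ z² / 2` is a first integral, so with `θ(0) = 0` we get
`cos θ = c - κ z² / 2` where `c = 1 + κ z₀² / 2`, and `0 < c` is the condition
`-√(2/(-κ)) < z₀`. For `κ < 0` this gives `cos θ ≥ c > 0`, and `cos θ ≤ 1` gives `z² ≤ z₀²`.
Conversely, if `c ≤ 0` but `cos θ > 0` everywhere, then `z` never vanishes, hence stays
negative; so `θ' = κ z > 0` and `θ` increases from `0` without reaching `π/2`. For `s ≥ 1`
this forces `z' = sin θ(s) ≥ sin θ(1) > 0`, and `z` eventually becomes positive.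
-/

open Real Set

lemma lt_of_continuous_of_forall_ne {X : Type*} [TopologicalSpace X] [PreconnectedSpace X]
    {f : X → ℝ} (hf : Continuous f) {v : ℝ} (hv : ∀ x, f x ≠ v) {a : X} (ha : f a < v)
    (b : X) : f b < v := by
  by_contra! hb
  obtain ⟨c, hc⟩ := intermediate_value_univ a b hf ⟨ha.le, hb⟩
  exact hv c hc

namespace PendentChannel

variable {κ : ℝ} {z θ : ℝ → ℝ}

lemma cos_eq_of_hasDerivAt (hz : ∀ s, HasDerivAt z (sin (θ s)) s)
    (hθ : ∀ s, HasDerivAt θ (κ * z s) s) (hθ0 : θ 0 = 0) (s : ℝ) :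
    cos (θ s) = 1 + κ * (z 0 ^ 2 - z s ^ 2) / 2 := by
  have hE : ∀ t, HasDerivAt (fun t => cos (θ t) + κ * z t ^ 2 / 2) 0 t := fun t => by
    refine ((hθ t).cos.add ((((hz t).pow 2).const_mul κ).div_const 2)).congr_deriv ?_
    push_cast
    ring
  have := is_const_of_deriv_eq_zero (fun t => (hE t).differentiableAt) (fun t => (hE t).deriv) s 0
  simp only [hθ0, cos_zero] at this
  linarith

lemma neg_sqrt_lt_iff {z₀ : ℝ} (hκ : κ < 0) (hz₀ : z₀ < 0) :
    -√(2 / -κ) < z₀ ↔ 0 < 1 + κ * z₀ ^ 2 / 2 := by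
  rw [neg_lt, ← abs_of_neg hz₀, lt_sqrt (abs_nonneg z₀), sq_abs, lt_div_iff₀ (neg_pos.2 hκ)]
  constructor <;> intro h <;> linarith

lemma exists_cos_nonpos (hz : ∀ s, HasDerivAt z (sin (θ s)) s)
    (hθ : ∀ s, HasDerivAt θ (κ * z s) s) (hκ : κ < 0) (hθ0 : θ 0 = 0) (hz0 : z 0 < 0)
    (hc : 1 + κ * z 0 ^ 2 / 2 ≤ 0) : ∃ s, cos (θ s) ≤ 0 := by
  by_contra! hcos
  have hz_cont : Continuous z := continuous_iff_continuousAt.2 fun s => (hz s).continuousAt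
  have hθ_cont : Continuous θ := continuous_iff_continuousAt.2 fun s => (hθ s).continuousAt
  have hz_neg : ∀ s, z s < 0 := by
    refine lt_of_continuous_of_forall_ne hz_cont (fun s hs => ?_) hz0
    have := cos_eq_of_hasDerivAt hz hθ hθ0 s
    linarith [hcos s, hs ▸ this]
  have hθ_mono : StrictMono θ :=
    strictMono_of_hasDerivAt_pos hθ fun s => mul_pos_of_neg_of_neg hκ (hz_neg s)
  have hθ_lt : ∀ s, θ s < π / 2 := by
    refine lt_of_continuous_of_forall_ne hθ_cont (fun s hs => ?_) (a := 0) ?_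
    · simpa [hs] using hcos s
    · rw [hθ0]; positivity
  have hθ1 : 0 < θ 1 := hθ0 ▸ hθ_mono zero_lt_one
  set m := sin (θ 1)
  have hm : 0 < m := sin_pos_of_pos_of_lt_pi hθ1 (by linarith [hθ_lt 1, pi_pos])
  have hgrowth : ∀ s, 1 ≤ s → m * (s - 1) ≤ z s - z 1 := fun s hs => by
    refine (convex_Ici 1).mul_sub_le_image_sub_of_le_deriv hz_cont.continuousOn
      (fun t _ => (hz t).differentiableAt.differentiableWithinAt) (fun t ht => ?_) 1 le_rfl
      s hs hs
    rw [interior_Ici] at ht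
    rw [(hz t).deriv]
    exact sin_le_sin_of_le_of_le_pi_div_two (by linarith [pi_pos]) (hθ_lt t).le
      (hθ_mono.monotone (le_of_lt ht))
  have hs : 1 ≤ 1 - z 1 / m := le_sub_self_iff _ |>.2 (div_nonpos_of_nonpos_of_nonneg
    (hz_neg 1).le hm.le)
  have := hgrowth _ hs
  rw [sub_sub_cancel_left, mul_neg, mul_div_cancel₀ _ hm.ne'] at this
  linarith [hz_neg (1 - z 1 / m)]

end PendentChannel

open PendentChannel in
theorem stmt_17_general (κ : ℝ) (hκ : κ < 0) (z₀ : ℝ) (hz₀ : z₀ < 0) (x z θ : ℝ → ℝ)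
    (hz : Differentiable ℝ z) (hθ : Differentiable ℝ θ)
    (hode : ∀ s : ℝ, deriv x s = Real.cos (θ s) ∧ deriv z s = Real.sin (θ s) ∧
      deriv θ s = κ * z s)
    (hθ0 : θ 0 = 0) (hz0 : z 0 = z₀) :
    ((∀ s : ℝ, 0 < Real.cos (θ s)) ↔ -Real.sqrt (2 / (-κ)) < z₀) ∧
    (-Real.sqrt (2 / (-κ)) < z₀ → ∀ s : ℝ, z₀ ≤ z s ∧ z s ≤ -z₀) := by
  have hz' : ∀ s, HasDerivAt z (sin (θ s)) s := fun s => (hode s).2.1 ▸ (hz s).hasDerivAt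
  have hθ' : ∀ s, HasDerivAt θ (κ * z s) s := fun s => (hode s).2.2 ▸ (hθ s).hasDerivAt
  have hcos := cos_eq_of_hasDerivAt hz' hθ' hθ0
  rw [neg_sqrt_lt_iff hκ hz₀]
  subst hz0
  refine ⟨⟨fun hpos => ?_, fun hc s => ?_⟩, fun _ s => ?_⟩
  · by_contra! hc
    obtain ⟨s, hs⟩ := exists_cos_nonpos hz' hθ' hκ hθ0 hz₀ hc
    exact (hpos s).not_ge hs
  · nlinarith [hcos s, sq_nonneg (z s)]
  · have hsq : z s ^ 2 ≤ z 0 ^ 2 := by nlinarith [hcos s, cos_le_one (θ s)]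
    rw [sq_le_sq, abs_of_neg hz₀] at hsq
    exact ⟨by linarith [neg_abs_le (z s)], (le_abs_self _).trans hsq⟩

/-- Graph criterion for pendent channels: for κ < 0 and z₀ < 0,
the directrix has no vertical points (cos θ(s) > 0 for all s) if and only if
−√(2/(−κ)) < z₀; in this case z₀ ≤ z(s) ≤ −z₀ for all s. -/
theorem stmt_17 (κ : ℝ) (hκ : κ < 0) (z₀ : ℝ) (hz₀ : z₀ < 0) (x z θ : ℝ → ℝ)
    (hx : Differentiable ℝ x) (hz : Differentiable ℝ z) (hθ : Differentiable ℝ θ)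
    (hode : ∀ s : ℝ, deriv x s = Real.cos (θ s) ∧ deriv z s = Real.sin (θ s) ∧
      deriv θ s = κ * z s)
    (hx0 : x 0 = 0) (hθ0 : θ 0 = 0) (hz0 : z 0 = z₀) :
    ((∀ s : ℝ, 0 < Real.cos (θ s)) ↔ -Real.sqrt (2 / (-κ)) < z₀) ∧
    (-Real.sqrt (2 / (-κ)) < z₀ → ∀ s : ℝ, z₀ ≤ z s ∧ z s ≤ -z₀) :=
  stmt_17_general κ hκ z₀ hz₀ x z θ hz hθ hode hθ0 hz0
end

section
/- Let κ < 0 and let u be a solution of the capillary equation with u(0) = u₀ < 0 and u'(0) = 0, defined on an interval [0, R]. Then for every r ∈ (0, R] such that u(t) < 0 for all t ∈ [0, r], the strict inequalities κ u(r) < (u'(r)/√(1 + u'(r)²))/r < κ u₀ hold; in particular sin ψ(r) < κ u₀ r where sin ψ(r) = u'(r)/√(1 + u'(r)²). -/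
/-!
Write `s = sin ψ = u' / √(1 + u'²)`. The capillary equation says exactly `s' = κ u`, and
`s(0) = 0`. While `u < 0` the derivative `κ u` is positive, so `s`, and with it `u'`, is
positive on `(0, r]`; hence `u` is increasing there and `κ u` is strictly decreasing, taking
values strictly between `κ u(r)` and `κ u₀` inside `(0, r)`. The mean value theorem applied to
`s` on `[0, r]` then gives `κ u(r) r < s(r) < κ u₀ r`.
-/

open Set

noncomputable def sinInclination (u : ℝ → ℝ) (t : ℝ) : ℝ :=
  deriv u t / Real.sqrt (1 + deriv u t ^ 2)

lemma hasDerivAt_div_sqrt_one_add_sq (v : ℝ) :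
    HasDerivAt (fun x : ℝ => x / Real.sqrt (1 + x ^ 2))
      ((1 + v ^ 2) ^ ((3 : ℝ) / 2))⁻¹ v := by
  have hpos : 0 < 1 + v ^ 2 := by positivity
  have hsqrt : HasDerivAt (fun x : ℝ => Real.sqrt (1 + x ^ 2))
      (1 / (2 * Real.sqrt (1 + v ^ 2)) * (2 * v ^ 1)) v :=
    (Real.hasDerivAt_sqrt hpos.ne').comp v ((hasDerivAt_pow 2 v).const_add 1)
  refine ((hasDerivAt_id v).div hsqrt (Real.sqrt_pos.mpr hpos).ne').congr_deriv ?_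
  rw [show (3 : ℝ) / 2 = 1 + 1 / 2 by norm_num, Real.rpow_add hpos, Real.rpow_one,
    ← Real.sqrt_eq_rpow]
  have hsq : Real.sqrt (1 + v ^ 2) ^ 2 = 1 + v ^ 2 := Real.sq_sqrt hpos.le
  have hne : Real.sqrt (1 + v ^ 2) ≠ 0 := (Real.sqrt_pos.mpr hpos).ne'
  field_simp
  simp only [id]
  nlinarith [hsq]

lemma sinInclination_pos_iff (u : ℝ → ℝ) (t : ℝ) :
    0 < sinInclination u t ↔ 0 < deriv u t :=
  div_pos_iff_of_pos_right (Real.sqrt_pos.mpr (by positivity))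

section Capillary

variable {κ R : ℝ} {u : ℝ → ℝ}

lemma hasDerivAt_sinInclination (hu' : Differentiable ℝ (deriv u)) (t : ℝ) :
    HasDerivAt (sinInclination u)
      (deriv (deriv u) t / (1 + deriv u t ^ 2) ^ ((3 : ℝ) / 2)) t := by
  rw [div_eq_inv_mul]
  exact (hasDerivAt_div_sqrt_one_add_sq (deriv u t)).comp t (hu' t).hasDerivAt

lemma deriv_sinInclination_of_capillary (hu' : Differentiable ℝ (deriv u))
    (hode : ∀ r ∈ Icc (0 : ℝ) R,
      deriv (deriv u) r = κ * u r * (1 + (deriv u r) ^ 2) ^ ((3 : ℝ) / 2))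
    {t : ℝ} (ht : t ∈ Icc 0 R) :
    deriv (sinInclination u) t = κ * u t := by
  rw [(hasDerivAt_sinInclination hu' t).deriv, hode t ht, mul_div_cancel_right₀]
  positivity

lemma strictMonoOn_of_capillary_of_neg (hκ : κ < 0) (hu : Differentiable ℝ u)
    (hu' : Differentiable ℝ (deriv u))
    (hode : ∀ r ∈ Icc (0 : ℝ) R,
      deriv (deriv u) r = κ * u r * (1 + (deriv u r) ^ 2) ^ ((3 : ℝ) / 2))
    (hdu0 : deriv u 0 = 0) {r : ℝ} (hrR : r ≤ R) (hneg : ∀ t ∈ Icc 0 r, u t < 0) :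
    StrictMonoOn u (Icc 0 r) := by
  have hs_mono : StrictMonoOn (sinInclination u) (Icc 0 r) := by
    refine strictMonoOn_of_deriv_pos (convex_Icc 0 r)
      (fun t _ => (hasDerivAt_sinInclination hu' t).continuousAt.continuousWithinAt) ?_
    intro t ht
    rw [interior_Icc] at ht
    have ht' : t ∈ Icc 0 r := Ioo_subset_Icc_self ht
    rw [deriv_sinInclination_of_capillary hu' hode ⟨ht'.1, ht'.2.trans hrR⟩]
    exact mul_pos_of_neg_of_neg hκ (hneg t ht')
  refine strictMonoOn_of_deriv_pos (convex_Icc 0 r) hu.continuous.continuousOn ?_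
  intro t ht
  rw [interior_Icc] at ht
  rw [← sinInclination_pos_iff]
  have hs0 : sinInclination u 0 = 0 := by simp [sinInclination, hdu0]
  simpa [hs0] using
    hs_mono (left_mem_Icc.mpr (ht.1.trans ht.2).le) (Ioo_subset_Icc_self ht) ht.1

end Capillary

theorem stmt_18_general (κ R u₀ : ℝ) (hκ : κ < 0) (u : ℝ → ℝ)
    (hu : Differentiable ℝ u) (hu' : Differentiable ℝ (deriv u))
    (hode : ∀ r ∈ Set.Icc (0 : ℝ) R,
      deriv (deriv u) r = κ * u r * (1 + (deriv u r) ^ 2) ^ ((3 : ℝ) / 2))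
    (hu0 : u 0 = u₀) (hdu0 : deriv u 0 = 0) :
    ∀ r ∈ Set.Ioc (0 : ℝ) R, (∀ t ∈ Set.Icc (0 : ℝ) r, u t < 0) →
      κ * u r < (deriv u r / Real.sqrt (1 + (deriv u r) ^ 2)) / r ∧
      (deriv u r / Real.sqrt (1 + (deriv u r) ^ 2)) / r < κ * u₀ ∧
      deriv u r / Real.sqrt (1 + (deriv u r) ^ 2) < κ * u₀ * r := by
  rintro r ⟨hr0, hrR⟩ hneg
  set s := sinInclination u
  have hs : Differentiable ℝ s := fun t => (hasDerivAt_sinInclination hu' t).differentiableAt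
  have hs0 : s 0 = 0 := by simp [s, sinInclination, hdu0]
  have hds : ∀ t ∈ Ioo 0 r, deriv s t = κ * u t := fun t ht =>
    deriv_sinInclination_of_capillary hu' hode ⟨ht.1.le, ht.2.le.trans hrR⟩
  have hu_mono := strictMonoOn_of_capillary_of_neg hκ hu hu' hode hdu0 hrR hneg
  have h0 : (0 : ℝ) ∈ Icc 0 r := left_mem_Icc.mpr hr0.le
  have hr : r ∈ Icc 0 r := right_mem_Icc.mpr hr0.le
  have lower : κ * u r * (r - 0) < s r - s 0 :=
    (convex_Icc 0 r).mul_sub_lt_image_sub_of_lt_deriv hs.continuous.continuousOn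
      hs.differentiableOn (fun t ht => by
        rw [interior_Icc] at ht
        rw [hds t ht, mul_lt_mul_left_of_neg hκ]
        exact hu_mono (Ioo_subset_Icc_self ht) hr ht.2) 0 h0 r hr hr0
  have upper : s r - s 0 < κ * u₀ * (r - 0) :=
    (convex_Icc 0 r).image_sub_lt_mul_sub_of_deriv_lt hs.continuous.continuousOn
      hs.differentiableOn (fun t ht => by
        rw [interior_Icc] at ht
        rw [hds t ht, mul_lt_mul_left_of_neg hκ, ← hu0]
        exact hu_mono h0 (Ioo_subset_Icc_self ht) ht.1) 0 h0 r hr hr0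
  rw [hs0, sub_zero, sub_zero] at lower upper
  exact ⟨(lt_div_iff₀ hr0).mpr lower, (div_lt_iff₀ hr0).mpr upper, upper⟩

/-- for κ < 0 and a pendent solution with u(0) = u₀ < 0,
u'(0) = 0, at every r ∈ (0, R] where u has been negative on [0, r] one has
κ u(r) < (sin ψ(r))/r < κ u₀, with sin ψ(r) = u'(r)/√(1 + u'(r)²);
in particular sin ψ(r) < κ u₀ r. -/
theorem stmt_18 (κ R u₀ : ℝ) (hκ : κ < 0) (hR : 0 < R) (u : ℝ → ℝ)
    (hu : Differentiable ℝ u) (hu' : Differentiable ℝ (deriv u))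
    (hode : ∀ r ∈ Set.Icc (0 : ℝ) R,
      deriv (deriv u) r = κ * u r * (1 + (deriv u r) ^ 2) ^ ((3 : ℝ) / 2))
    (hu0 : u 0 = u₀) (hu₀neg : u₀ < 0) (hdu0 : deriv u 0 = 0) :
    ∀ r ∈ Set.Ioc (0 : ℝ) R, (∀ t ∈ Set.Icc (0 : ℝ) r, u t < 0) →
      κ * u r < (deriv u r / Real.sqrt (1 + (deriv u r) ^ 2)) / r ∧
      (deriv u r / Real.sqrt (1 + (deriv u r) ^ 2)) / r < κ * u₀ ∧
      deriv u r / Real.sqrt (1 + (deriv u r) ^ 2) < κ * u₀ * r :=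
  stmt_18_general κ R u₀ hκ u hu hu' hode hu0 hdu0
end
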